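/- arXiv:1503.06239 — 6 statements merged into one kernel-verified Lean document; each statement's English description precedes it below -/
import Mathlib

section
/- Let L be a block tridiagonal positive semi-definite matrix with diagonal blocks L_1,...,L_m indexed by Y_1,...,Y_m, such that L_{Y_i, Y_j} = 0 whenever |i - j| ≥ 2. Let C ⊆ Y with C_i = C ∩ Y_i, and assume each principal submatrix L_{C_i} is invertible. Define recursively L̃_{C_1} = L_{C_1} and L̃_{C_i} = L_{C_i} − (L_{C_{i-1},C_i})^T (L̃_{C_{i-1}})^{-1} L_{C_{i-1},C_i} for i ≥ 2. Then det(L_C) = ∏_{i=1}^m det(L̃_{C_i}). -/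
/-!
Write `D k = C 0 ∪ ⋯ ∪ C (k - 1)`. The Schur complement of `L_{D k}` in
`L_{D (k+1)} = L_{D k ∪ C k}` gives
`det L_{D (k+1)} = det L_{D k} · det (L_{C k} - L_{C k, D k} L_{D k}⁻¹ L_{D k, C k})`.
By block tridiagonality the rows of `L_{D k, C k}` outside `C (k - 1)` vanish, so only the
`C (k - 1)` corner of `L_{D k}⁻¹` enters; by the block inversion formula that corner is the
inverse of the previous Schur complement `L̃_{C (k - 1)}`. Hence the Schur complement is
`L̃_{C k}`, and induction on `k` gives the product formula, carrying the corner of the inverse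
along. Once some `L̃_{C k}` is singular both sides vanish: a principal submatrix of a positive
definite matrix is positive definite, so the positive semidefinite `L_C` is singular as soon as
its principal submatrix `L_{D (k+1)}` is.
-/

open Matrix

/-- Principal/rectangular submatrix of `L` with rows indexed by `A` and columns by `B`. -/
def subm {N : ℕ} (L : Matrix (Fin N) (Fin N) ℝ) (A B : Finset (Fin N)) :
    Matrix A B ℝ := Matrix.of fun i j => L i.1 j.1

open Finset Function

def Finset.inclusion {α : Type*} {s t : Finset α} (h : s ⊆ t) : s → t := fun x => ⟨x, h x.2⟩

theorem Finset.inclusion_injective {α : Type*} {s t : Finset α} (h : s ⊆ t) :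
    Injective (Finset.inclusion h) :=
  fun _ _ hxy => Subtype.ext (congrArg (Subtype.val : t → α) hxy)

open scoped ComplexOrder

namespace Matrix

theorem mul_mul_eq_submatrix_mul_mul {m n p q R : Type*} [Fintype m] [Fintype n]
    [NonUnitalNonAssocSemiring R] {f : m → n} (hf : Injective f)
    (Q : Matrix p n R) (X : Matrix n n R) (P : Matrix n q R)
    (hQ : ∀ i, ∀ j ∉ Set.range f, Q i j = 0) (hP : ∀ i ∉ Set.range f, ∀ j, P i j = 0) :
    Q * X * P = Q.submatrix id f * X.submatrix f f * P.submatrix f id := by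
  ext i l
  simp only [mul_apply, submatrix_apply, id]
  refine (Fintype.sum_of_injective f hf _ _ (fun k hk => by simp [hP k hk]) fun k => ?_).symm
  congr 1
  exact Fintype.sum_of_injective f hf _ _ (fun k hk => by simp [hQ i k hk]) fun _ => rfl

theorem PosSemidef.det_submatrix_ne_zero {m n 𝕜 : Type*} [Fintype m] [Fintype n]
    [DecidableEq m] [DecidableEq n] [RCLike 𝕜] {M : Matrix n n 𝕜} (hM : M.PosSemidef)
    (hdet : M.det ≠ 0) {f : m → n} (hf : Injective f) : (M.submatrix f f).det ≠ 0 :=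
  (hM.submatrix f).posDef_iff_det_ne_zero.1 ((hM.posDef_iff_det_ne_zero.2 hdet).submatrix hf)

section FinsetBlocks

variable {α K : Type*} [DecidableEq α] (M : Matrix α α K) {s t : Finset α}

theorem toBlock_union_submatrix_eq_fromBlocks (hst : Disjoint s t) :
    (M.toBlock (· ∈ s ∪ t) (· ∈ s ∪ t)).submatrix
        (Equiv.Finset.union s t hst) (Equiv.Finset.union s t hst) =
      fromBlocks (M.toBlock (· ∈ s) (· ∈ s)) (M.toBlock (· ∈ s) (· ∈ t))
        (M.toBlock (· ∈ t) (· ∈ s)) (M.toBlock (· ∈ t) (· ∈ t)) := by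
  ext (i | i) (j | j) <;> rfl

variable [Field K]

theorem det_toBlock_union (hst : Disjoint s t) (hs : IsUnit (M.toBlock (· ∈ s) (· ∈ s)).det) :
    (M.toBlock (· ∈ s ∪ t) (· ∈ s ∪ t)).det =
      (M.toBlock (· ∈ s) (· ∈ s)).det *
        (M.toBlock (· ∈ t) (· ∈ t) - M.toBlock (· ∈ t) (· ∈ s) *
          (M.toBlock (· ∈ s) (· ∈ s))⁻¹ * M.toBlock (· ∈ s) (· ∈ t)).det := by
  let := invertibleOfIsUnitDet _ hs
  rw [← det_submatrix_equiv_self (Equiv.Finset.union s t hst),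
    toBlock_union_submatrix_eq_fromBlocks M hst, det_fromBlocks₁₁, invOf_eq_nonsing_inv]

theorem inv_toBlock_union_submatrix_inclusion (hst : Disjoint s t) (h : t ⊆ s ∪ t)
    (hs : IsUnit (M.toBlock (· ∈ s) (· ∈ s)).det)
    (hschur : IsUnit (M.toBlock (· ∈ t) (· ∈ t) - M.toBlock (· ∈ t) (· ∈ s) *
      (M.toBlock (· ∈ s) (· ∈ s))⁻¹ * M.toBlock (· ∈ s) (· ∈ t)).det) :
    (M.toBlock (· ∈ s ∪ t) (· ∈ s ∪ t))⁻¹.submatrix (inclusion h) (inclusion h) =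
      (M.toBlock (· ∈ t) (· ∈ t) - M.toBlock (· ∈ t) (· ∈ s) *
        (M.toBlock (· ∈ s) (· ∈ s))⁻¹ * M.toBlock (· ∈ s) (· ∈ t))⁻¹ := by
  let := invertibleOfIsUnitDet _ hs
  let := invertibleOfIsUnitDet _ (by rwa [← invOf_eq_nonsing_inv] at hschur)
  let := fromBlocks₁₁Invertible (M.toBlock (· ∈ s) (· ∈ s)) (M.toBlock (· ∈ s) (· ∈ t))
    (M.toBlock (· ∈ t) (· ∈ s)) (M.toBlock (· ∈ t) (· ∈ t))
  have hinv := inv_submatrix_equiv (M.toBlock (· ∈ s ∪ t) (· ∈ s ∪ t))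
    (Equiv.Finset.union s t hst) (Equiv.Finset.union s t hst)
  rw [toBlock_union_submatrix_eq_fromBlocks M hst, ← invOf_eq_nonsing_inv,
    invOf_fromBlocks₁₁_eq] at hinv
  ext i j
  have := congrFun (congrFun hinv (.inr i)) (.inr j)
  simp only [fromBlocks_apply₂₂, invOf_eq_nonsing_inv] at this
  exact this.symm

end FinsetBlocks

section BlockTridiagonal

variable {α K : Type*} [DecidableEq α] [Field K] {C : ℕ → Finset α} {m : ℕ}

theorem schur_complement_biUnion_range_eq {M : Matrix α α K} (hM : M.IsSymm)
    (htri : ∀ i j, i + 2 ≤ j → j < m → ∀ a ∈ C i, ∀ b ∈ C j, M a b = 0)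
    {S : (i : ℕ) → Matrix (C i) (C i) K}
    (hS0 : S 0 = M.toBlock (· ∈ C 0) (· ∈ C 0))
    (hS : ∀ i, i + 1 < m → S (i + 1) = M.toBlock (· ∈ C (i + 1)) (· ∈ C (i + 1)) -
      (M.toBlock (· ∈ C i) (· ∈ C (i + 1)))ᵀ * (S i)⁻¹ * M.toBlock (· ∈ C i) (· ∈ C (i + 1)))
    {k : ℕ} (hk : k < m)
    (hcorner : ∀ j, k = j + 1 → ∀ h : C j ⊆ (range k).biUnion C,
      (M.toBlock (· ∈ (range k).biUnion C) (· ∈ (range k).biUnion C))⁻¹.submatrix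
        (inclusion h) (inclusion h) = (S j)⁻¹) :
    M.toBlock (· ∈ C k) (· ∈ C k) - M.toBlock (· ∈ C k) (· ∈ (range k).biUnion C) *
      (M.toBlock (· ∈ (range k).biUnion C) (· ∈ (range k).biUnion C))⁻¹ *
        M.toBlock (· ∈ (range k).biUnion C) (· ∈ C k) = S k := by
  obtain _ | j := k
  · have : IsEmpty ((range 0).biUnion C) := Finset.isEmpty_coe_sort.2 (by simp)
    rw [hS0, sub_eq_self]
    ext
    simp only [mul_apply, Fintype.sum_empty, Matrix.zero_apply]
  have hj : C j ⊆ (range (j + 1)).biUnion C := subset_biUnion_of_mem C (by simp)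
  have hsupp : ∀ a : (range (j + 1)).biUnion C, a ∉ Set.range (inclusion hj) →
      ∀ b : C (j + 1), M a b = 0 := by
    rintro ⟨a, ha⟩ hna ⟨b, hb⟩
    obtain ⟨i, hi, hai⟩ := mem_biUnion.1 ha
    have hij : i ≠ j := by
      rintro rfl
      exact hna ⟨⟨a, hai⟩, rfl⟩
    exact htri i (j + 1) (by simp at hi; omega) hk a hai b hb
  have hsymm : (M.toBlock (· ∈ C (j + 1)) (· ∈ (range (j + 1)).biUnion C)).submatrix id
      (inclusion hj) = (M.toBlock (· ∈ C j) (· ∈ C (j + 1)))ᵀ := by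
    ext a b
    exact hM.apply _ _
  rw [mul_mul_eq_submatrix_mul_mul (inclusion_injective hj) (M.toBlock _ _) _ (M.toBlock _ _)
      (fun b a ha => (hM.apply _ _).trans (hsupp a ha b)) (fun a ha b => hsupp a ha b),
    hcorner j rfl hj, hsymm, hS j hk]
  rfl

theorem det_toBlock_biUnion_range_and_inv_corner {M : Matrix α α ℝ} (hM : M.PosSemidef)
    (hdisj : ∀ i j, i < j → j < m → Disjoint (C i) (C j))
    (htri : ∀ i j, i + 2 ≤ j → j < m → ∀ a ∈ C i, ∀ b ∈ C j, M a b = 0)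
    {S : (i : ℕ) → Matrix (C i) (C i) ℝ}
    (hS0 : S 0 = M.toBlock (· ∈ C 0) (· ∈ C 0))
    (hS : ∀ i, i + 1 < m → S (i + 1) = M.toBlock (· ∈ C (i + 1)) (· ∈ C (i + 1)) -
      (M.toBlock (· ∈ C i) (· ∈ C (i + 1)))ᵀ * (S i)⁻¹ * M.toBlock (· ∈ C i) (· ∈ C (i + 1)))
    {k : ℕ} (hk : k ≤ m) :
    (M.toBlock (· ∈ (range k).biUnion C) (· ∈ (range k).biUnion C)).det =
        ∏ i ∈ range k, (S i).det ∧
      (∏ i ∈ range k, (S i).det ≠ 0 → ∀ j, k = j + 1 → ∀ h : C j ⊆ (range k).biUnion C,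
        (M.toBlock (· ∈ (range k).biUnion C) (· ∈ (range k).biUnion C))⁻¹.submatrix
          (inclusion h) (inclusion h) = (S j)⁻¹) := by
  induction k with
  | zero =>
    have : IsEmpty ((range 0).biUnion C) := Finset.isEmpty_coe_sort.2 (by simp)
    exact ⟨by rw [det_isEmpty, prod_range_zero], fun _ j hj => absurd hj (Nat.zero_ne_add_one j)⟩
  | succ k ih =>
    have hkm : k < m := hk
    obtain ⟨hdet, hcorner⟩ := ih hkm.le
    have hDC : Disjoint ((range k).biUnion C) (C k) :=
      (disjoint_biUnion_left _ _ _).2 fun i hi => hdisj i k (mem_range.1 hi) hkm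
    rw [prod_range_succ, range_add_one, biUnion_insert, union_comm]
    by_cases hprod : ∏ i ∈ range k, (S i).det = 0
    · rw [hprod, zero_mul]
      refine ⟨?_, fun h => absurd rfl h⟩
      by_contra hne
      exact (hM.submatrix Subtype.val).det_submatrix_ne_zero hne
        (inclusion_injective subset_union_left) (hdet.trans hprod)
    have hA : IsUnit (M.toBlock (· ∈ (range k).biUnion C) (· ∈ (range k).biUnion C)).det :=
      hdet ▸ isUnit_iff_ne_zero.2 hprod
    have hschur := schur_complement_biUnion_range_eq
      (isHermitian_iff_isSymm.1 hM.isHermitian) htri hS0 hS hkm (hcorner hprod)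
    refine ⟨by rw [det_toBlock_union M hDC hA, hschur, hdet], fun hne j hj h => ?_⟩
    obtain rfl : k = j := by omega
    have hSk : IsUnit (S k).det := isUnit_iff_ne_zero.2 (right_ne_zero_of_mul hne)
    rw [inv_toBlock_union_submatrix_inclusion M hDC h hA (hschur ▸ hSk), hschur]

end BlockTridiagonal

end Matrix

theorem stmt2_general {N m : ℕ} (L : Matrix (Fin N) (Fin N) ℝ) (hL : L.PosSemidef)
    (Y : ℕ → Finset (Fin N))
    (hdisj : ∀ i < m, ∀ j < m, i ≠ j → Disjoint (Y i) (Y j))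
    (htri : ∀ i < m, ∀ j < m, i + 2 ≤ j →
      ∀ a ∈ Y i, ∀ b ∈ Y j, L a b = 0 ∧ L b a = 0)
    (Ci : ℕ → Finset (Fin N)) (hCi : ∀ i < m, Ci i ⊆ Y i)
    (Lt : (i : ℕ) → Matrix (Ci i) (Ci i) ℝ)
    (hLt0 : Lt 0 = subm L (Ci 0) (Ci 0))
    (hLtS : ∀ i, 0 < i → i < m →
      Lt i = subm L (Ci i) (Ci i)
        - (subm L (Ci (i - 1)) (Ci i))ᵀ * (Lt (i - 1))⁻¹ * subm L (Ci (i - 1)) (Ci i)) :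
    (subm L ((Finset.range m).biUnion Ci) ((Finset.range m).biUnion Ci)).det
      = ∏ i ∈ Finset.range m, (Lt i).det := by
  have hdisjC : ∀ i j, i < j → j < m → Disjoint (Ci i) (Ci j) := fun i j hij hj =>
    (hdisj i (hij.trans hj) j hj hij.ne).mono (hCi i (hij.trans hj)) (hCi j hj)
  have htriC : ∀ i j, i + 2 ≤ j → j < m → ∀ a ∈ Ci i, ∀ b ∈ Ci j, L a b = 0 :=
    fun i j hij hj a ha b hb =>
      (htri i (by omega) j hj hij a (hCi i (by omega) ha) b (hCi j hj hb)).1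
  exact (det_toBlock_biUnion_range_and_inv_corner hL hdisjC htriC hLt0
    (fun i hi => hLtS (i + 1) i.succ_pos hi) le_rfl).1

/-- For a block tridiagonal PSD matrix `L` with blocks `Y 0, …, Y (m-1)`
(`L_{Y_i,Y_j} = 0` for `|i-j| ≥ 2`), a subset `C` with parts `Ci i ⊆ Y i`, each `L_{C_i}`
invertible, and `L̃` defined by the Schur-complement recursion,
`det(L_C) = ∏ᵢ det(L̃_{C_i})`. -/
theorem stmt2 {N m : ℕ} (L : Matrix (Fin N) (Fin N) ℝ) (hL : L.PosSemidef)
    (Y : ℕ → Finset (Fin N))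
    (hdisj : ∀ i < m, ∀ j < m, i ≠ j → Disjoint (Y i) (Y j))
    (hcover : (Finset.range m).biUnion Y = Finset.univ)
    (htri : ∀ i < m, ∀ j < m, i + 2 ≤ j →
      ∀ a ∈ Y i, ∀ b ∈ Y j, L a b = 0 ∧ L b a = 0)
    (Ci : ℕ → Finset (Fin N)) (hCi : ∀ i < m, Ci i ⊆ Y i)
    (hinv : ∀ i < m, IsUnit (subm L (Ci i) (Ci i)).det)
    (Lt : (i : ℕ) → Matrix (Ci i) (Ci i) ℝ)
    (hLt0 : Lt 0 = subm L (Ci 0) (Ci 0))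
    (hLtS : ∀ i, 0 < i → i < m →
      Lt i = subm L (Ci i) (Ci i)
        - (subm L (Ci (i - 1)) (Ci i))ᵀ * (Lt (i - 1))⁻¹ * subm L (Ci (i - 1)) (Ci i)) :
    (subm L ((Finset.range m).biUnion Ci) ((Finset.range m).biUnion Ci)).det
      = ∏ i ∈ Finset.range m, (Lt i).det :=
  stmt2_general L hL Y hdisj htri Ci hCi Lt hLt0 hLtS
end

section
/- Let L be a block tridiagonal positive semi-definite matrix with diagonal blocks indexed by Y_1,...,Y_m (so L_{Y_i,Y_j} = 0 for |i−j| ≥ 2), and fix subsets C_i ⊆ Y_i with L̃_{C_i} invertible at each stage, where L̃_{Y_1} = L_{Y_1} and L̃_{Y_i} = L_{Y_i} − (L_{C_{i-1},Y_i})^T (L̃_{C_{i-1}})^{-1} L_{C_{i-1},Y_i}, with L̃_{C_i} the principal submatrix of L̃_{Y_i} indexed by C_i. Then each matrix L̃_{Y_i} is positive semi-definite. -/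
open Matrix

/-- Principal submatrix of a matrix indexed by `A`, restricted to `B ⊆ A`. -/
def subm2 {N : ℕ} {A B : Finset (Fin N)} (M : Matrix A A ℝ) (h : B ⊆ A) :
    Matrix B B ℝ := Matrix.of fun i j => M ⟨i.1, h i.2⟩ ⟨j.1, h j.2⟩

/-!
Along the recursion, the matrix obtained from `L` by restricting to `Y_i` together with all
later blocks, and replacing its `Y_i`-block by `L̃_{Y_i}`, stays positive semidefinite. For
`i = 0` it is a principal submatrix of `L`. The next one is a principal submatrix of the Schur
complement of the positive definite pivot `L̃_{C_i}`: by block tridiagonality the rows of `L`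
indexed by `C_i` vanish on the blocks after `Y_{i+1}`, so eliminating `C_i` changes only the
`Y_{i+1}`-block, and it changes it by exactly the correction defining `L̃_{Y_{i+1}}`.
-/

section Elimination

variable {N : ℕ} {L : Matrix (Fin N) (Fin N) ℝ} {A C E : Finset (Fin N)}

def bordered (L : Matrix (Fin N) (Fin N) ℝ) (M : Matrix A A ℝ) (E : Finset (Fin N)) :
    Matrix (A ⊕ E) (A ⊕ E) ℝ :=
  fromBlocks M (subm L A E) (subm L E A) (subm L E E)

lemma subm_conjTranspose (hL : L.IsHermitian) (A B : Finset (Fin N)) :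
    (subm L A B)ᴴ = subm L B A := by
  ext i j
  exact congrFun₂ hL i.1 j.1

lemma posSemidef_subm2 {M : Matrix A A ℝ} (hM : M.PosSemidef) (h : C ⊆ A) :
    (subm2 M h).PosSemidef :=
  hM.submatrix _

lemma Matrix.PosSemidef.bordered_subm (hL : L.PosSemidef) (A E : Finset (Fin N)) :
    (bordered L (subm L A A) E).PosSemidef := by
  have : bordered L (subm L A A) E =
      L.submatrix (Sum.elim Subtype.val Subtype.val) (Sum.elim Subtype.val Subtype.val) := by
    ext (p | p) (q | q) <;> rfl
  exact this ▸ hL.submatrix _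

lemma Matrix.PosSemidef.of_bordered {M : Matrix A A ℝ} (hM : (bordered L M E).PosSemidef) :
    M.PosSemidef :=
  hM.submatrix Sum.inl

lemma Matrix.PosSemidef.schur_of_bordered (hL : L.IsHermitian) {M : Matrix A A ℝ}
    (hM : (bordered L M E).PosSemidef) (hC : C ⊆ A) (hdet : (subm2 M hC).det ≠ 0) :
    (subm L E E - (subm L C E)ᵀ * (subm2 M hC)⁻¹ * subm L C E).PosSemidef := by
  have hpd : (subm2 M hC).PosDef :=
    (posSemidef_subm2 hM.of_bordered hC).posDef_iff_det_ne_zero.2 hdet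
  have := hpd.isUnit.invertible
  have hrestrict : fromBlocks (subm2 M hC) (subm L C E) (subm L C E)ᴴ (subm L E E) =
      (bordered L M E).submatrix (Sum.map (fun c => ⟨c.1, hC c.2⟩) id)
        (Sum.map (fun c => ⟨c.1, hC c.2⟩) id) := by
    rw [subm_conjTranspose hL]
    ext (p | p) (q | q) <;> rfl
  rw [← conjTranspose_eq_transpose_of_trivial,
    ← PosDef.fromBlocks₁₁ _ _ hpd, hrestrict]
  exact hM.submatrix _

lemma schur_submatrix_eq_bordered {Y' E' : Finset (Fin N)} (X : Matrix C C ℝ)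
    (hY' : Y' ⊆ E) (hE' : E' ⊆ E) (hzero : ∀ c ∈ C, ∀ e ∈ E', L c e = 0) :
    (subm L E E - (subm L C E)ᵀ * X * subm L C E).submatrix
        (Sum.elim (fun y => ⟨y.1, hY' y.2⟩) (fun e => ⟨e.1, hE' e.2⟩))
        (Sum.elim (fun y => ⟨y.1, hY' y.2⟩) (fun e => ⟨e.1, hE' e.2⟩)) =
      bordered L (subm L Y' Y' - (subm L C Y')ᵀ * X * subm L C Y') E' := by
  ext (p | p) (q | q)
  · rfl
  · simp [bordered, subm, mul_apply, hzero _ _ _ q.2]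
  · simp [bordered, subm, mul_apply, hzero _ _ _ p.2]
  · simp [bordered, subm, mul_apply, hzero _ _ _ q.2]

lemma Matrix.PosSemidef.bordered_eliminate (hL : L.IsHermitian) {M : Matrix A A ℝ}
    (hM : (bordered L M E).PosSemidef) (hC : C ⊆ A) (hdet : (subm2 M hC).det ≠ 0)
    {Y' E' : Finset (Fin N)} (hY' : Y' ⊆ E) (hE' : E' ⊆ E)
    (hzero : ∀ c ∈ C, ∀ e ∈ E', L c e = 0) :
    (bordered L (subm L Y' Y' - (subm L C Y')ᵀ * (subm2 M hC)⁻¹ * subm L C Y')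
      E').PosSemidef := by
  rw [← schur_submatrix_eq_bordered _ hY' hE' hzero]
  exact (hM.schur_of_bordered hL hC hdet).submatrix _

end Elimination

def laterBlocks {α : Type*} [DecidableEq α] (Y : ℕ → Finset α) (m i : ℕ) : Finset α :=
  (Finset.Ico (i + 1) m).biUnion Y

section LaterBlocks

variable {α : Type*} [DecidableEq α] {Y : ℕ → Finset α} {m i : ℕ}

lemma subset_laterBlocks (h : i + 1 < m) : Y (i + 1) ⊆ laterBlocks Y m i :=
  Finset.subset_biUnion_of_mem Y (Finset.mem_Ico.2 ⟨le_rfl, h⟩)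

lemma laterBlocks_succ_subset : laterBlocks Y m (i + 1) ⊆ laterBlocks Y m i :=
  Finset.biUnion_subset_biUnion_of_subset_left _ (Finset.Ico_subset_Ico_left (by omega))

end LaterBlocks

theorem stmt4_general {N m : ℕ} (L : Matrix (Fin N) (Fin N) ℝ) (hL : L.PosSemidef)
    (Y : ℕ → Finset (Fin N))
    (htri : ∀ i < m, ∀ j < m, i + 2 ≤ j →
      ∀ a ∈ Y i, ∀ b ∈ Y j, L a b = 0 ∧ L b a = 0)
    (Ci : ℕ → Finset (Fin N)) (hCi : ∀ i, Ci i ⊆ Y i)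
    (Lt : (i : ℕ) → Matrix (Y i) (Y i) ℝ)
    (hLt0 : Lt 0 = subm L (Y 0) (Y 0))
    (hLtS : ∀ i, 0 < i → i < m →
      Lt i = subm L (Y i) (Y i)
        - (subm L (Ci (i - 1)) (Y i))ᵀ * (subm2 (Lt (i - 1)) (hCi (i - 1)))⁻¹
            * subm L (Ci (i - 1)) (Y i))
    (hpd : ∀ i < m, 0 < (subm2 (Lt i) (hCi i)).det) :
    ∀ i < m, (Lt i).PosSemidef := by
  have hzero : ∀ i < m, ∀ c ∈ Ci i, ∀ e ∈ laterBlocks Y m (i + 1), L c e = 0 := by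
    intro i hi c hc e he
    obtain ⟨j, hj, hej⟩ := Finset.mem_biUnion.1 he
    rw [Finset.mem_Ico] at hj
    exact (htri i hi j hj.2 (by omega) c (hCi i hc) e hej).1
  have hbordered : ∀ i < m, (bordered L (Lt i) (laterBlocks Y m i)).PosSemidef := by
    intro i
    induction i with
    | zero => exact fun _ => hLt0 ▸ hL.bordered_subm _ _
    | succ i ih =>
      intro hi
      have hLt := hLtS (i + 1) i.succ_pos hi
      simp only [Nat.add_one_sub_one] at hLt
      rw [hLt]
      exact (ih (by omega)).bordered_eliminate hL.isHermitian (hCi i) (hpd i (by omega)).ne'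
        (subset_laterBlocks hi) laterBlocks_succ_subset (hzero i (by omega))
  exact fun i hi => (hbordered i hi).of_bordered

/-- For a block tridiagonal PSD matrix `L` with blocks `Y 0, …, Y (m-1)` and
subsets `Ci i ⊆ Y i` with each `L̃_{C_i}` positive definite (`det > 0`), the matrices
`L̃_{Y_i}` defined by `L̃_{Y_1} = L_{Y_1}`,
`L̃_{Y_i} = L_{Y_i} − (L_{C_{i-1},Y_i})ᵀ (L̃_{C_{i-1}})⁻¹ L_{C_{i-1},Y_i}`
are positive semi-definite. -/
theorem stmt4 {N m : ℕ} (L : Matrix (Fin N) (Fin N) ℝ) (hL : L.PosSemidef)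
    (Y : ℕ → Finset (Fin N))
    (hdisj : ∀ i < m, ∀ j < m, i ≠ j → Disjoint (Y i) (Y j))
    (hcover : (Finset.range m).biUnion Y = Finset.univ)
    (htri : ∀ i < m, ∀ j < m, i + 2 ≤ j →
      ∀ a ∈ Y i, ∀ b ∈ Y j, L a b = 0 ∧ L b a = 0)
    (Ci : ℕ → Finset (Fin N)) (hCi : ∀ i, Ci i ⊆ Y i)
    (Lt : (i : ℕ) → Matrix (Y i) (Y i) ℝ)
    (hLt0 : Lt 0 = subm L (Y 0) (Y 0))
    (hLtS : ∀ i, 0 < i → i < m →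
      Lt i = subm L (Y i) (Y i)
        - (subm L (Ci (i - 1)) (Y i))ᵀ * (subm2 (Lt (i - 1)) (hCi (i - 1)))⁻¹
            * subm L (Ci (i - 1)) (Y i))
    (hpd : ∀ i < m, 0 < (subm2 (Lt i) (hCi i)).det) :
    ∀ i < m, (Lt i).PosSemidef :=
  stmt4_general L hL Y htri Ci hCi Lt hLt0 hLtS hpd
end

section
/- Let L be a block tridiagonal positive semi-definite matrix as above with subsets C_i ⊆ Y_i, and let Ĉ_{1:i} = C_1 ∪ ... ∪ C_i. Assuming the relevant matrices are invertible, the principal submatrix of (L_{Ĉ_{1:i}})^{-1} indexed by C_i equals (L̃_{C_i})^{-1}, where L̃_{C_1} = L_{C_1} and L̃_{C_i} = L_{C_i} − (L_{C_{i-1},C_i})^T (L̃_{C_{i-1}})^{-1} L_{C_{i-1},C_i}. -/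
open Matrix

namespace Stmt5Aux

lemma block_inv22 {n a b : Type} [Fintype n] [Fintype a] [Fintype b]
    [DecidableEq n] [DecidableEq a] [DecidableEq b]
    (EA : Matrix n a ℝ) (EB : Matrix n b ℝ) (M : Matrix n n ℝ)
    (P : Matrix a a ℝ) (Q : Matrix a b ℝ) (R : Matrix b a ℝ) (D S : Matrix b b ℝ)
    (hAA : EAᵀ * EA = 1) (hBB : EBᵀ * EB = 1) (hAB : EAᵀ * EB = 0)
    (hcov : EA * EAᵀ + EB * EBᵀ = 1)
    (hPdef : EAᵀ * M * EA = P) (hQdef : EAᵀ * M * EB = Q)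
    (hRdef : EBᵀ * M * EA = R) (hDdef : EBᵀ * M * EB = D)
    (hSdef : D - R * P⁻¹ * Q = S)
    (hP : IsUnit P.det) (hS : IsUnit S.det) :
    EBᵀ * M⁻¹ * EB = S⁻¹ := by
  have hBA : EBᵀ * EA = 0 := by
    have := congrArg Matrix.transpose hAB
    simpa [Matrix.transpose_mul] using this
  have rAA : ∀ {k : Type} [Fintype k] (X : Matrix a k ℝ), EAᵀ * (EA * X) = X := by
    intro k _ X; rw [← Matrix.mul_assoc, hAA, Matrix.one_mul]
  have rBB : ∀ {k : Type} [Fintype k] (X : Matrix b k ℝ), EBᵀ * (EB * X) = X := by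
    intro k _ X; rw [← Matrix.mul_assoc, hBB, Matrix.one_mul]
  have rAB : ∀ {k : Type} [Fintype k] (X : Matrix b k ℝ), EAᵀ * (EB * X) = 0 := by
    intro k _ X; rw [← Matrix.mul_assoc, hAB, Matrix.zero_mul]
  have rBA : ∀ {k : Type} [Fintype k] (X : Matrix a k ℝ), EBᵀ * (EA * X) = 0 := by
    intro k _ X; rw [← Matrix.mul_assoc, hBA, Matrix.zero_mul]
  have hPP : P * P⁻¹ = 1 := Matrix.mul_nonsing_inv _ hP
  have hSS : S * S⁻¹ = 1 := Matrix.mul_nonsing_inv _ hS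
  -- block decomposition of M
  have hM : M = EA * P * EAᵀ + EA * Q * EBᵀ + EB * R * EAᵀ + EB * D * EBᵀ := by
    have h1 : M = (EA * EAᵀ + EB * EBᵀ) * M * (EA * EAᵀ + EB * EBᵀ) := by
      rw [hcov, Matrix.one_mul, Matrix.mul_one]
    rw [← hPdef, ← hQdef, ← hRdef, ← hDdef]
    conv_lhs => rw [h1]
    simp only [Matrix.add_mul, Matrix.mul_add, Matrix.mul_assoc]
    abel
  set W : Matrix n n ℝ :=
    EA * (P⁻¹ + P⁻¹ * Q * S⁻¹ * R * P⁻¹) * EAᵀ - EA * (P⁻¹ * Q * S⁻¹) * EBᵀ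
      - EB * (S⁻¹ * R * P⁻¹) * EAᵀ + EB * S⁻¹ * EBᵀ with hW
  have e11 : P * (P⁻¹ + P⁻¹ * Q * S⁻¹ * R * P⁻¹) - Q * (S⁻¹ * R * P⁻¹) = 1 := by
    rw [Matrix.mul_add, hPP,
      show P * (P⁻¹ * Q * S⁻¹ * R * P⁻¹) = (P * P⁻¹) * (Q * (S⁻¹ * R * P⁻¹)) by
        simp only [Matrix.mul_assoc], hPP, Matrix.one_mul]
    abel
  have e12 : -(P * (P⁻¹ * Q * S⁻¹)) + Q * S⁻¹ = 0 := by
    rw [show P * (P⁻¹ * Q * S⁻¹) = (P * P⁻¹) * (Q * S⁻¹) by simp only [Matrix.mul_assoc],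
      hPP, Matrix.one_mul]
    abel
  have e21 : R * (P⁻¹ + P⁻¹ * Q * S⁻¹ * R * P⁻¹) - D * (S⁻¹ * R * P⁻¹) = 0 := by
    have h2 : S * (S⁻¹ * (R * P⁻¹)) = R * P⁻¹ := by
      rw [← Matrix.mul_assoc, hSS, Matrix.one_mul]
    nth_rewrite 1 [← hSdef] at h2
    rw [Matrix.mul_add]
    have h3 : R * (P⁻¹ * Q * S⁻¹ * R * P⁻¹) = (R * P⁻¹ * Q) * (S⁻¹ * (R * P⁻¹)) := by
      simp only [Matrix.mul_assoc]
    have h4 : D * (S⁻¹ * R * P⁻¹) = D * (S⁻¹ * (R * P⁻¹)) := by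
      simp only [Matrix.mul_assoc]
    rw [h3, h4]
    rw [Matrix.sub_mul] at h2
    linear_combination (norm := abel) -h2
  have e22 : -(R * (P⁻¹ * Q * S⁻¹)) + D * S⁻¹ = 1 := by
    have h2 : (D - R * P⁻¹ * Q) * S⁻¹ = 1 := by rw [hSdef]; exact hSS
    rw [Matrix.sub_mul] at h2
    have h3 : R * (P⁻¹ * Q * S⁻¹) = R * P⁻¹ * Q * S⁻¹ := by
      simp only [Matrix.mul_assoc]
    rw [h3]
    linear_combination (norm := abel) h2
  have hMW : M * W = 1 := by
    rw [hW, hM]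
    simp only [Matrix.mul_add, Matrix.add_mul, Matrix.mul_sub, Matrix.sub_mul,
      Matrix.mul_assoc, rAA, rBB, rAB, rBA, Matrix.mul_zero, Matrix.zero_mul,
      Matrix.mul_one]
    have f11 := congrArg (fun X => EA * X * EAᵀ) e11
    have f12 := congrArg (fun X => EA * X * EBᵀ) e12
    have f21 := congrArg (fun X => EB * X * EAᵀ) e21
    have f22 := congrArg (fun X => EB * X * EBᵀ) e22
    simp only [Matrix.mul_add, Matrix.add_mul, Matrix.mul_sub, Matrix.sub_mul,
      Matrix.neg_mul, Matrix.mul_neg, Matrix.mul_assoc, Matrix.mul_one,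
      Matrix.one_mul, Matrix.zero_mul, Matrix.mul_zero] at f11 f12 f21 f22
    linear_combination (norm := abel) f11 + f12 + f21 + f22 + hcov
  have hMinv : M⁻¹ = W := Matrix.inv_eq_right_inv hMW
  rw [hMinv, hW]
  simp only [Matrix.mul_sub, Matrix.mul_add, Matrix.sub_mul, Matrix.add_mul,
    Matrix.mul_assoc, rAA, rBB, rAB, rBA, Matrix.mul_zero, Matrix.zero_mul,
    Matrix.mul_one, hBB, hAA, hAB, hBA]
  abel


variable {N : ℕ}

/-- Inclusion indicator matrix with rows indexed by `B`, columns by `A` (intended `A ⊆ B`). -/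
def emb (A B : Finset (Fin N)) : Matrix B A ℝ :=
  Matrix.of fun b a => if (b : Fin N) = (a : Fin N) then 1 else 0

lemma embT_mul_emb {A B : Finset (Fin N)} (h : A ⊆ B) :
    (emb A B)ᵀ * emb A B = 1 := by
  ext a a'
  simp only [Matrix.mul_apply, transpose_apply, emb, of_apply, Matrix.one_apply]
  rw [Finset.sum_eq_single (⟨a.1, h a.2⟩ : B)]
  · by_cases hc : a = a'
    · subst hc; simp
    · have : ¬ ((a : Fin N) = (a' : Fin N)) := fun hh => hc (Subtype.ext hh)
      simp [this, hc]
  · intro b _ hb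
    have : ¬ ((b : Fin N) = (a : Fin N)) := by
      intro hh; exact hb (Subtype.ext hh)
    simp [this]
  · simp

lemma emb_mul_embT {A B : Finset (Fin N)} (h : A ⊆ B) (x y : B) :
    (emb A B * (emb A B)ᵀ) x y = if (x : Fin N) = (y : Fin N) ∧ (x : Fin N) ∈ A then 1 else 0 := by
  simp only [Matrix.mul_apply, transpose_apply, emb, of_apply]
  by_cases hx : (x : Fin N) ∈ A
  · rw [Finset.sum_eq_single (⟨x.1, hx⟩ : A)]
    · by_cases hc : (x : Fin N) = (y : Fin N)
      · have hy : (y : Fin N) = (x : Fin N) := hc.symm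
        simp [hy, hx]
      · have hy : ¬ ((y : Fin N) = (x : Fin N)) := fun hh => hc hh.symm
        simp [hc, hy]
    · intro a _ ha
      have : ¬ ((x : Fin N) = (a : Fin N)) := by
        intro hh; exact ha (by apply Subtype.ext; exact hh.symm)
      simp [this]
    · simp
  · rw [Finset.sum_eq_zero]
    · simp [hx]
    · intro a _
      have : ¬ ((x : Fin N) = (a : Fin N)) := by
        intro hh; exact hx (hh ▸ a.2)
      simp [this]

lemma cover_lemma {A B G : Finset (Fin N)} (hA : A ⊆ G) (hB : B ⊆ G)
    (hd : Disjoint A B) (hG : G ⊆ A ∪ B) :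
    emb A G * (emb A G)ᵀ + emb B G * (emb B G)ᵀ = 1 := by
  ext x y
  rw [Matrix.add_apply, emb_mul_embT hA, emb_mul_embT hB]
  have hx : (x : Fin N) ∈ A ∪ B := hG x.2
  by_cases hc : x = y
  · subst hc
    rcases Finset.mem_union.mp hx with h1 | h2
    · have : (x : Fin N) ∉ B := Finset.disjoint_left.mp hd h1
      simp [h1, this, Matrix.one_apply]
    · have : (x : Fin N) ∉ A := Finset.disjoint_right.mp hd h2
      simp [h2, this, Matrix.one_apply]
  · have : ¬ ((x : Fin N) = (y : Fin N)) := fun hh => hc (Subtype.ext hh)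
    simp [this, Matrix.one_apply, hc]

lemma embT_mul_emb_disjoint {A B G : Finset (Fin N)} (hd : Disjoint A B) :
    (emb A G)ᵀ * emb B G = 0 := by
  ext a b
  simp only [Matrix.mul_apply, transpose_apply, emb, of_apply, Matrix.zero_apply]
  rw [Finset.sum_eq_zero]
  intro g _
  by_cases h1 : (g : Fin N) = (a : Fin N)
  · have h2 : ¬ ((g : Fin N) = (b : Fin N)) := by
      intro hh
      exact Finset.disjoint_left.mp hd (h1 ▸ a.2) (hh ▸ b.2)
    simp [h2]
  · simp [h1]

lemma embT_mul_mul_emb {A A' G : Finset (Fin N)} (hA : A ⊆ G) (hA' : A' ⊆ G)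
    (X : Matrix G G ℝ) :
    (emb A G)ᵀ * X * emb A' G
      = Matrix.of fun (a : A) (a' : A') => X ⟨a.1, hA a.2⟩ ⟨a'.1, hA' a'.2⟩ := by
  ext a a'
  rw [Matrix.mul_apply, Finset.sum_eq_single (⟨a'.1, hA' a'.2⟩ : G)]
  · rw [Matrix.mul_apply, Finset.sum_eq_single (⟨a.1, hA a.2⟩ : G)]
    · simp [emb]
    · intro g _ hg
      have : ¬ ((g : Fin N) = (a : Fin N)) := fun hh => hg (Subtype.ext hh)
      simp [emb, this]
    · simp
  · intro g _ hg
    have : ¬ ((g : Fin N) = (a' : Fin N)) := fun hh => hg (Subtype.ext hh)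
    simp [emb, this]
  · simp

lemma embT_mul_mul_emb_subm2 {A G : Finset (Fin N)} (hA : A ⊆ G) (X : Matrix G G ℝ) :
    (emb A G)ᵀ * X * emb A G = subm2 X hA := by
  rw [embT_mul_mul_emb hA hA]; rfl

lemma embT_mul_subm_mul_emb {A A' G : Finset (Fin N)} (hA : A ⊆ G) (hA' : A' ⊆ G)
    (L : Matrix (Fin N) (Fin N) ℝ) :
    (emb A G)ᵀ * subm L G G * emb A' G = subm L A A' := by
  rw [embT_mul_mul_emb hA hA']; rfl

lemma subm_factor {A B C : Finset (Fin N)} (hAB : A ⊆ B) (L : Matrix (Fin N) (Fin N) ℝ)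
    (hz : ∀ b ∈ B, b ∉ A → ∀ c ∈ C, L b c = 0) :
    subm L B C = emb A B * subm L A C := by
  ext b c
  simp only [Matrix.mul_apply, emb, subm, of_apply]
  by_cases hb : (b : Fin N) ∈ A
  · rw [Finset.sum_eq_single (⟨b.1, hb⟩ : A)]
    · simp
    · intro a _ ha
      have : ¬ ((b : Fin N) = (a : Fin N)) := by
        intro hh; exact ha (by apply Subtype.ext; exact hh.symm)
      simp [this]
    · simp
  · rw [Finset.sum_eq_zero]
    · exact hz b.1 b.2 hb c.1 c.2
    · intro a _
      have : ¬ ((b : Fin N) = (a : Fin N)) := by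
        intro hh; exact hb (hh ▸ a.2)
      simp [this]


lemma emb_mul_embT_one {A B : Finset (Fin N)} (h : A ⊆ B) (h' : B ⊆ A) :
    emb A B * (emb A B)ᵀ = 1 := by
  ext x y
  rw [emb_mul_embT h]
  by_cases hc : x = y
  · subst hc; simp [h' x.2, Matrix.one_apply]
  · have : ¬ ((x : Fin N) = (y : Fin N)) := fun hh => hc (Subtype.ext hh)
    simp [this, Matrix.one_apply, hc]


end Stmt5Aux

open Stmt5Aux


/-- With `Ĉ_{1:i} = C_0 ∪ ⋯ ∪ C_i` and `L̃` defined by the Schur-complement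
recursion, the principal submatrix of `(L_{Ĉ_{1:i}})⁻¹` indexed by `C_i` equals
`(L̃_{C_i})⁻¹`, assuming the relevant matrices are invertible. -/
theorem stmt5 {N m : ℕ} (L : Matrix (Fin N) (Fin N) ℝ) (hL : L.PosSemidef)
    (Y : ℕ → Finset (Fin N))
    (hdisj : ∀ i < m, ∀ j < m, i ≠ j → Disjoint (Y i) (Y j))
    (hcover : (Finset.range m).biUnion Y = Finset.univ)
    (htri : ∀ i < m, ∀ j < m, i + 2 ≤ j →
      ∀ a ∈ Y i, ∀ b ∈ Y j, L a b = 0 ∧ L b a = 0)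
    (Ci : ℕ → Finset (Fin N)) (hCi : ∀ i < m, Ci i ⊆ Y i)
    (Lt : (i : ℕ) → Matrix (Ci i) (Ci i) ℝ)
    (hLt0 : Lt 0 = subm L (Ci 0) (Ci 0))
    (hLtS : ∀ i, 0 < i → i < m →
      Lt i = subm L (Ci i) (Ci i)
        - (subm L (Ci (i - 1)) (Ci i))ᵀ * (Lt (i - 1))⁻¹ * subm L (Ci (i - 1)) (Ci i))
    (hinvU : ∀ i < m,
      IsUnit (subm L ((Finset.range (i + 1)).biUnion Ci)
        ((Finset.range (i + 1)).biUnion Ci)).det)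
    (hinvLt : ∀ i < m, IsUnit (Lt i).det) :
    ∀ i < m,
      subm2 ((subm L ((Finset.range (i + 1)).biUnion Ci)
          ((Finset.range (i + 1)).biUnion Ci))⁻¹)
          (Finset.subset_biUnion_of_mem Ci (Finset.self_mem_range_succ i))
        = (Lt i)⁻¹ := by
  have hsym : Lᵀ = L := by
    have h := hL.1
    ext i j
    simpa using congrFun (congrFun h i) j
  have hsym' : ∀ p q : Fin N, L p q = L q p := by
    intro p q
    exact congrFun (congrFun hsym q) p
  have hCd : ∀ p, p < m → ∀ q, q < m → p ≠ q → Disjoint (Ci p) (Ci q) := by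
    intro p hp q hq hne
    exact Finset.disjoint_of_subset_left (hCi p hp)
      (Finset.disjoint_of_subset_right (hCi q hq) (hdisj p hp q hq hne))
  intro i
  induction i with
  | zero =>
    intro h0
    have hsub : Ci 0 ⊆ (Finset.range (0 + 1)).biUnion Ci :=
      Finset.subset_biUnion_of_mem Ci (Finset.self_mem_range_succ 0)
    have hsup : (Finset.range (0 + 1)).biUnion Ci ⊆ Ci 0 := by
      intro x hx
      rcases Finset.mem_biUnion.mp hx with ⟨j, hj, hxj⟩
      have : j = 0 := Nat.lt_one_iff.mp (Finset.mem_range.mp hj)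
      rwa [this] at hxj
    set M := subm L ((Finset.range (0 + 1)).biUnion Ci) ((Finset.range (0 + 1)).biUnion Ci)
      with hMdef
    set E := emb (Ci 0) ((Finset.range (0 + 1)).biUnion Ci) with hEdef
    have h1 : Eᵀ * E = 1 := embT_mul_emb hsub
    have h2 : E * Eᵀ = 1 := emb_mul_embT_one hsub hsup
    have key : (Eᵀ * M * E) * (Eᵀ * M⁻¹ * E) = 1 := by
      have h3 : E * (Eᵀ * (M⁻¹ * E)) = M⁻¹ * E := by
        rw [← Matrix.mul_assoc, h2, Matrix.one_mul]
      calc (Eᵀ * M * E) * (Eᵀ * M⁻¹ * E)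
          = Eᵀ * (M * (E * (Eᵀ * (M⁻¹ * E)))) := by simp only [Matrix.mul_assoc]
        _ = Eᵀ * (M * (M⁻¹ * E)) := by rw [h3]
        _ = Eᵀ * ((M * M⁻¹) * E) := by rw [Matrix.mul_assoc]
        _ = Eᵀ * E := by rw [Matrix.mul_nonsing_inv _ (hinvU 0 h0), Matrix.one_mul]
        _ = 1 := h1
    have hME : Eᵀ * M * E = subm L (Ci 0) (Ci 0) := embT_mul_subm_mul_emb hsub hsub L
    have hfin : Eᵀ * M⁻¹ * E = (Lt 0)⁻¹ := by
      rw [show Eᵀ * M⁻¹ * E = (Eᵀ * M * E)⁻¹ from (Matrix.inv_eq_right_inv key).symm,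
        hME, hLt0]
    rw [← embT_mul_mul_emb_subm2 hsub (M⁻¹)]
    exact hfin
  | succ k ih =>
    intro hkm
    have hk : k < m := Nat.lt_of_succ_lt hkm
    set A := (Finset.range (k + 1)).biUnion Ci with hAdef
    set G := (Finset.range (k + 1 + 1)).biUnion Ci with hGdef
    have hAG : A ⊆ G :=
      Finset.biUnion_subset_biUnion_of_subset_left _ (Finset.range_subset_range.mpr (by omega))
    have hBG : Ci (k + 1) ⊆ G :=
      Finset.subset_biUnion_of_mem Ci (Finset.self_mem_range_succ (k + 1))
    have hCkA : Ci k ⊆ A := Finset.subset_biUnion_of_mem Ci (Finset.self_mem_range_succ k)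
    have hdAB : Disjoint A (Ci (k + 1)) := by
      rw [Finset.disjoint_left]
      intro x hxA hxB
      rcases Finset.mem_biUnion.mp hxA with ⟨j, hj, hxj⟩
      have hjk : j < k + 1 := Finset.mem_range.mp hj
      exact Finset.disjoint_left.mp
        (hCd j (by omega) (k + 1) hkm (by omega)) hxj hxB
    have hGAB : G ⊆ A ∪ Ci (k + 1) := by
      intro x hx
      rcases Finset.mem_biUnion.mp hx with ⟨j, hj, hxj⟩
      have hjk : j < k + 2 := Finset.mem_range.mp hj
      rcases Nat.lt_or_ge j (k + 1) with h | h
      · exact Finset.mem_union_left _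
          (Finset.mem_biUnion.mpr ⟨j, Finset.mem_range.mpr h, hxj⟩)
      · have : j = k + 1 := by omega
        exact Finset.mem_union_right _ (this ▸ hxj)
    set M := subm L G G with hMdef
    set EA := emb A G with hEAdef
    set EB := emb (Ci (k + 1)) G with hEBdef
    have hAA : EAᵀ * EA = 1 := embT_mul_emb hAG
    have hBB : EBᵀ * EB = 1 := embT_mul_emb hBG
    have hAB : EAᵀ * EB = 0 := embT_mul_emb_disjoint hdAB
    have hcov : EA * EAᵀ + EB * EBᵀ = 1 := cover_lemma hAG hBG hdAB hGAB
    have hPdef : EAᵀ * M * EA = subm L A A := embT_mul_subm_mul_emb hAG hAG L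
    have hQdef : EAᵀ * M * EB = subm L A (Ci (k + 1)) := embT_mul_subm_mul_emb hAG hBG L
    have hRdef : EBᵀ * M * EA = subm L (Ci (k + 1)) A := embT_mul_subm_mul_emb hBG hAG L
    have hDdef : EBᵀ * M * EB = subm L (Ci (k + 1)) (Ci (k + 1)) :=
      embT_mul_subm_mul_emb hBG hBG L
    -- zero structure of the off-diagonal block
    have hz : ∀ b ∈ A, b ∉ Ci k → ∀ c ∈ Ci (k + 1), L b c = 0 := by
      intro b hbA hbk c hc
      rcases Finset.mem_biUnion.mp hbA with ⟨j, hj, hbj⟩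
      have hjk : j < k + 1 := Finset.mem_range.mp hj
      have hjne : j ≠ k := by
        intro h; exact hbk (h ▸ hbj)
      have hj2 : j + 2 ≤ k + 1 := by omega
      exact (htri j (by omega) (k + 1) hkm hj2 b (hCi j (by omega) hbj)
        c (hCi (k + 1) hkm hc)).1
    have hQfact : subm L A (Ci (k + 1)) = emb (Ci k) A * subm L (Ci k) (Ci (k + 1)) :=
      subm_factor hCkA L hz
    have hRQ : subm L (Ci (k + 1)) A = (subm L A (Ci (k + 1)))ᵀ := by
      ext x y
      exact hsym' x.1 y.1
    -- the middle inverse block via the induction hypothesis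
    have hmid : (emb (Ci k) A)ᵀ * (subm L A A)⁻¹ * emb (Ci k) A = (Lt k)⁻¹ := by
      rw [embT_mul_mul_emb_subm2 hCkA]
      exact ih hk
    have hSchur : subm L (Ci (k + 1)) (Ci (k + 1))
        - subm L (Ci (k + 1)) A * (subm L A A)⁻¹ * subm L A (Ci (k + 1))
        = Lt (k + 1) := by
      rw [hRQ, hQfact]
      have : (emb (Ci k) A * subm L (Ci k) (Ci (k + 1)))ᵀ * (subm L A A)⁻¹
            * (emb (Ci k) A * subm L (Ci k) (Ci (k + 1)))
          = (subm L (Ci k) (Ci (k + 1)))ᵀ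
            * ((emb (Ci k) A)ᵀ * (subm L A A)⁻¹ * emb (Ci k) A)
            * subm L (Ci k) (Ci (k + 1)) := by
        rw [Matrix.transpose_mul]
        simp only [Matrix.mul_assoc]
      rw [this, hmid]
      have := hLtS (k + 1) (Nat.succ_pos k) hkm
      exact this.symm
    have hP : IsUnit (subm L A A).det := hinvU k hk
    have hS : IsUnit (Lt (k + 1)).det := hinvLt (k + 1) hkm
    have hmain : EBᵀ * M⁻¹ * EB = (Lt (k + 1))⁻¹ :=
      block_inv22 EA EB M (subm L A A) (subm L A (Ci (k + 1)))
        (subm L (Ci (k + 1)) A) (subm L (Ci (k + 1)) (Ci (k + 1))) (Lt (k + 1))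
        hAA hBB hAB hcov hPdef hQdef hRdef hDdef hSchur hP hS
    rw [← embT_mul_mul_emb_subm2 hBG (M⁻¹)]
    exact hmain
end

section
/- Let L be a positive semi-definite matrix indexed by a finite set Y defining the L-ensemble DPP P_L(Y') ∝ det(L_{Y'}), and let A^in, A^out ⊆ Y be disjoint. Then the conditional kernel satisfying P_L(Y' = A^in ∪ B | A^in ⊆ Y', A^out ∩ Y' = ∅) ∝ det(K_B) for B ⊆ Y \ (A^in ∪ A^out) is given by K = ([(L_{complement of A^out} + I_{complement of A^in})^{-1}]_{complement of A^in})^{-1} − I, where I_{S} denotes the matrix that is the identity on indices in S and zero elsewhere, provided the relevant inverses exist. -/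
open Matrix

/-- The complement of `Aout`, i.e. `\bar{A}^{out}`. -/
def cAc {N : ℕ} (Aout : Finset (Fin N)) : Finset (Fin N) := Finset.univ \ Aout

/-- The remaining ground set `T = Y ∖ (A^{in} ∪ A^{out})`. -/
def cT {N : ℕ} (Ain Aout : Finset (Fin N)) : Finset (Fin N) :=
  Finset.univ \ (Ain ∪ Aout)

theorem cT_subset_cAc {N : ℕ} (Ain Aout : Finset (Fin N)) : cT Ain Aout ⊆ cAc Aout :=
  Finset.sdiff_subset_sdiff (Finset.Subset.refl _) Finset.subset_union_right

/-- `L_{\bar{A}^{out}} + I_{\bar{A}^{in}}`, where `I_{\bar{A}^{in}}` is the identity on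
indices outside `A^{in}` and zero elsewhere. -/
def dppCondM {N : ℕ} (L : Matrix (Fin N) (Fin N) ℝ) (Ain Aout : Finset (Fin N)) :
    Matrix (cAc Aout) (cAc Aout) ℝ :=
  subm L (cAc Aout) (cAc Aout)
    + Matrix.of fun i j => if i = j ∧ i.1 ∉ Ain then (1 : ℝ) else 0

/-- The conditional DPP kernel `K = ([(L_{\bar{A}^{out}} + I_{\bar{A}^{in}})⁻¹]_{\bar{A}^{in}})⁻¹ − I`. -/
noncomputable def dppCondK {N : ℕ} (L : Matrix (Fin N) (Fin N) ℝ) (Ain Aout : Finset (Fin N)) :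
    Matrix (cT Ain Aout) (cT Ain Aout) ℝ :=
  (subm2 ((dppCondM L Ain Aout)⁻¹) (cT_subset_cAc Ain Aout))⁻¹ - 1

/-!
Write `M = L_{Ā^out} + I_{Ā^in}` in block form for `Ā^out = A^in ⊔ T`. Expanding `det M`
multilinearly in the rows gives `det M = ∑_{B ⊆ T} det L_{A^in ∪ B}`, the normalisation.
Jacobi's complementary-minor identity `det L_{A^in} = det M · det [M⁻¹]_T` makes `L_{A^in}`
invertible, and then the block inverse formula identifies `[M⁻¹]_T⁻¹ - I` with the Schur
complement of `L_{A^in}` in `L_{A^in ∪ T}`. So `K` is that Schur complement, `K_B` is the Schur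
complement of `L_{A^in}` in `L_{A^in ∪ B}`, and both `det L_{A^in ∪ B} = det L_{A^in} · det K_B`
and `det M = det L_{A^in} · det (K + I)` follow from the Schur determinant formula.
-/

namespace Matrix

variable {m n R : Type*} [Fintype m] [DecidableEq m] [Fintype n] [DecidableEq n] [CommRing R]

theorem det_add_diagonal (M : Matrix n n R) (d : n → R) :
    (M + diagonal d).det =
      ∑ t : Finset n, (∏ i ∈ tᶜ, d i) * (M.submatrix ((↑) : t → n) (↑)).det := by
  let D : (n → R) [⋀^n]→ₗ[R] R := detRowAlternating
  change D (M.row + (diagonal d).row) = _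
  rw [D.map_add_univ]
  refine Finset.sum_congr rfl fun t _ => ?_
  set P := t.piecewise M.row (1 : Matrix n n R).row
  have hrows : t.piecewise M.row (diagonal d).row = tᶜ.piecewise (fun i => d i • P i) P := by
    ext i j
    by_cases hi : i ∈ t <;> simp [P, Finset.piecewise, hi, diagonal_apply, one_apply, row]
  rw [hrows, ← det_piecewise_one_eq_submatrix_det, ← smul_eq_mul]
  exact D.toMultilinearMap.map_piecewise_smul d P tᶜ

theorem det_toBlocks₁₁_eq_det_mul_det_inv_toBlocks₂₂ (M : Matrix (m ⊕ n) (m ⊕ n) R)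
    (hM : IsUnit M.det) : M.toBlocks₁₁.det = M.det * (M⁻¹).toBlocks₂₂.det := by
  have h := M.mul_nonsing_inv hM
  set N := M⁻¹
  rw [← fromBlocks_toBlocks M, ← fromBlocks_toBlocks N, ← fromBlocks_one,
    fromBlocks_multiply, fromBlocks_inj] at h
  have hprod : M * fromBlocks 1 N.toBlocks₁₂ 0 N.toBlocks₂₂
      = fromBlocks M.toBlocks₁₁ 0 M.toBlocks₂₁ 1 := by
    conv_lhs => rw [← fromBlocks_toBlocks M]
    rw [fromBlocks_multiply]
    simp [h.2.1, h.2.2.2]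
  have := congrArg det hprod
  rwa [det_mul, det_fromBlocks_zero₂₁, det_fromBlocks_zero₁₂, det_one, det_one, one_mul,
    mul_one, eq_comm] at this

theorem inv_toBlocks₂₂_inv_eq (M : Matrix (m ⊕ n) (m ⊕ n) R) (hM : IsUnit M.det)
    (hA : IsUnit M.toBlocks₁₁.det) :
    (M⁻¹).toBlocks₂₂⁻¹ = M.toBlocks₂₂ - M.toBlocks₂₁ * M.toBlocks₁₁⁻¹ * M.toBlocks₁₂ := by
  have h := M.nonsing_inv_mul hM
  set N := M⁻¹
  rw [← fromBlocks_toBlocks M, ← fromBlocks_toBlocks N, ← fromBlocks_one,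
    fromBlocks_multiply, fromBlocks_inj] at h
  obtain ⟨-, -, h₂₁, h₂₂⟩ := h
  apply inv_eq_right_inv
  rw [Matrix.mul_sub, ← Matrix.mul_assoc, ← Matrix.mul_assoc, eq_neg_of_add_eq_zero_right h₂₁,
    Matrix.neg_mul, Matrix.neg_mul, Matrix.mul_assoc _ M.toBlocks₁₁, mul_nonsing_inv _ hA,
    Matrix.mul_one, sub_neg_eq_add, add_comm, h₂₂]

end Matrix

namespace DPP

variable {N : ℕ} (L : Matrix (Fin N) (Fin N) ℝ)

noncomputable def schurCompl (P Q : Finset (Fin N)) : Matrix Q Q ℝ :=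
  subm L Q Q - subm L Q P * (subm L P P)⁻¹ * subm L P Q

theorem det_subm_union_eq_mul_det_schurCompl {P Q : Finset (Fin N)} (h : Disjoint P Q)
    (hP : IsUnit (subm L P P).det) :
    (subm L (P ∪ Q) (P ∪ Q)).det = (subm L P P).det * (schurCompl L P Q).det := by
  have := invertibleOfIsUnitDet _ hP
  let e := Equiv.Finset.union P Q h
  have hblocks : (subm L (P ∪ Q) (P ∪ Q)).submatrix e e
      = fromBlocks (subm L P P) (subm L P Q) (subm L Q P) (subm L Q Q) := by
    ext (i | i) (j | j) <;> rfl
  rw [← det_submatrix_equiv_self e, hblocks, det_fromBlocks₁₁, invOf_eq_nonsing_inv, schurCompl]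

theorem subm2_schurCompl (P : Finset (Fin N)) {Q B : Finset (Fin N)} (hB : B ⊆ Q) :
    subm2 (schurCompl L P Q) hB = schurCompl L P B :=
  rfl

theorem det_submatrix_subtype_subm {S U : Finset (Fin N)} (hU : U ⊆ S) :
    ((subm L S S).submatrix ((↑) : U.subtype (· ∈ S) → S) (↑)).det = (subm L U U).det := by
  let e : U ≃ U.subtype (· ∈ S) :=
    ((Equiv.subtypeEquivRight fun _ => Finset.mem_subtype).trans
      (Equiv.subtypeSubtypeEquivSubtype fun hx => hU hx)).symm
  rw [← det_submatrix_equiv_self e]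
  rfl

theorem disjoint_cT (Ain Aout : Finset (Fin N)) : Disjoint Ain (cT Ain Aout) :=
  Finset.disjoint_left.mpr fun _ ha ht =>
    (Finset.mem_sdiff.mp ht).2 (Finset.mem_union_left _ ha)

variable {Ain Aout : Finset (Fin N)}

theorem union_cT (hdisj : Disjoint Ain Aout) : Ain ∪ cT Ain Aout = cAc Aout := by
  ext x
  have : x ∈ Ain → x ∉ Aout := fun h => Finset.disjoint_left.mp hdisj h
  simp only [cT, cAc, Finset.mem_union, Finset.mem_sdiff, Finset.mem_univ, true_and]
  tauto

theorem union_subset_cAc (hdisj : Disjoint Ain Aout) {B : Finset (Fin N)}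
    (hB : B ⊆ cT Ain Aout) : Ain ∪ B ⊆ cAc Aout :=
  union_cT hdisj ▸ Finset.union_subset_union_right hB

def blockEquiv (hdisj : Disjoint Ain Aout) : Ain ⊕ cT Ain Aout ≃ cAc Aout :=
  (Equiv.Finset.union _ _ (disjoint_cT Ain Aout)).trans
    (Equiv.subtypeEquivRight fun _ => by rw [union_cT hdisj])

theorem dppCondM_submatrix_blockEquiv (hdisj : Disjoint Ain Aout) :
    (dppCondM L Ain Aout).submatrix (blockEquiv hdisj) (blockEquiv hdisj)
      = fromBlocks (subm L Ain Ain) (subm L Ain (cT Ain Aout)) (subm L (cT Ain Aout) Ain)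
          (subm L (cT Ain Aout) (cT Ain Aout) + 1) := by
  ext (i | i) (j | j)
  · simp [dppCondM, blockEquiv, subm, i.2]
  · simp [dppCondM, blockEquiv, subm]
  · have hij : (i : Fin N) ≠ j :=
      fun h => Finset.disjoint_right.mp (disjoint_cT Ain Aout) i.2 (h ▸ j.2)
    simp [dppCondM, blockEquiv, subm, hij]
  · have hi : (i : Fin N) ∉ Ain := Finset.disjoint_right.mp (disjoint_cT Ain Aout) i.2
    simp [dppCondM, blockEquiv, subm, one_apply, hi]

theorem subm2_inv_dppCondM_eq_toBlocks₂₂ (hdisj : Disjoint Ain Aout) :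
    subm2 (dppCondM L Ain Aout)⁻¹ (cT_subset_cAc Ain Aout)
      = ((dppCondM L Ain Aout).submatrix (blockEquiv hdisj) (blockEquiv hdisj))⁻¹.toBlocks₂₂ := by
  rw [inv_submatrix_equiv]
  rfl

theorem isUnit_det_dppCondM_submatrix (hdisj : Disjoint Ain Aout)
    (hinv1 : IsUnit (dppCondM L Ain Aout).det) :
    IsUnit ((dppCondM L Ain Aout).submatrix (blockEquiv hdisj) (blockEquiv hdisj)).det := by
  rwa [det_submatrix_equiv_self]

theorem det_subm_eq_det_dppCondM_mul (hdisj : Disjoint Ain Aout)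
    (hinv1 : IsUnit (dppCondM L Ain Aout).det) :
    (subm L Ain Ain).det = (dppCondM L Ain Aout).det
      * (subm2 (dppCondM L Ain Aout)⁻¹ (cT_subset_cAc Ain Aout)).det := by
  have := det_toBlocks₁₁_eq_det_mul_det_inv_toBlocks₂₂ _
    (isUnit_det_dppCondM_submatrix L hdisj hinv1)
  rwa [det_submatrix_equiv_self, ← subm2_inv_dppCondM_eq_toBlocks₂₂,
    dppCondM_submatrix_blockEquiv, toBlocks_fromBlocks₁₁] at this

theorem isUnit_det_subm (hdisj : Disjoint Ain Aout)
    (hinv1 : IsUnit (dppCondM L Ain Aout).det)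
    (hinv2 : IsUnit (subm2 (dppCondM L Ain Aout)⁻¹ (cT_subset_cAc Ain Aout)).det) :
    IsUnit (subm L Ain Ain).det :=
  det_subm_eq_det_dppCondM_mul L hdisj hinv1 ▸ hinv1.mul hinv2

theorem dppCondK_eq_schurCompl (hdisj : Disjoint Ain Aout)
    (hinv1 : IsUnit (dppCondM L Ain Aout).det)
    (hinv2 : IsUnit (subm2 (dppCondM L Ain Aout)⁻¹ (cT_subset_cAc Ain Aout)).det) :
    dppCondK L Ain Aout = schurCompl L Ain (cT Ain Aout) := by
  have hA := isUnit_det_subm L hdisj hinv1 hinv2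
  have key := inv_toBlocks₂₂_inv_eq _ (isUnit_det_dppCondM_submatrix L hdisj hinv1)
    (by rwa [dppCondM_submatrix_blockEquiv, toBlocks_fromBlocks₁₁])
  rw [← subm2_inv_dppCondM_eq_toBlocks₂₂, dppCondM_submatrix_blockEquiv, toBlocks_fromBlocks₁₁,
    toBlocks_fromBlocks₁₂, toBlocks_fromBlocks₂₁, toBlocks_fromBlocks₂₂] at key
  rw [dppCondK, key, schurCompl, sub_right_comm, add_sub_cancel_right]

theorem dppCondM_eq_add_diagonal :
    dppCondM L Ain Aout
      = subm L (cAc Aout) (cAc Aout)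
          + diagonal fun i : cAc Aout => if (i : Fin N) ∉ Ain then 1 else 0 := by
  ext i j
  by_cases h : i = j <;> simp [dppCondM, h]

theorem det_dppCondM_eq_sum (hdisj : Disjoint Ain Aout) :
    (dppCondM L Ain Aout).det
      = ∑ B ∈ (cT Ain Aout).powerset, (subm L (Ain ∪ B) (Ain ∪ B)).det := by
  have hprod : ∀ t : Finset (cAc Aout),
      ∏ i ∈ tᶜ, (if (i : Fin N) ∉ Ain then (1 : ℝ) else 0)
        = if Ain.subtype (· ∈ cAc Aout) ⊆ t then 1 else 0 := by
    intro t
    rw [Finset.prod_boole]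
    congr 1
    simp only [Finset.mem_compl, Finset.subset_iff, Finset.mem_subtype, eq_iff_iff]
    exact ⟨fun h i hi => by_contra fun hit => h i hit hi, fun h i hit hi => hit (h hi)⟩
  rw [dppCondM_eq_add_diagonal, det_add_diagonal]
  simp only [hprod, boole_mul]
  rw [← Finset.sum_filter]
  symm
  refine Finset.sum_nbij' (fun B => (Ain ∪ B).subtype (· ∈ cAc Aout))
    (fun t => t.map (Function.Embedding.subtype _) \ Ain) ?_ ?_ ?_ ?_ ?_
  · intro B _
    simpa using Finset.subtype_mono Finset.subset_union_left
  · intro t _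
    refine Finset.mem_powerset.mpr fun x hx => ?_
    obtain ⟨hxt, hxA⟩ := Finset.mem_sdiff.mp hx
    obtain ⟨y, -, rfl⟩ := Finset.mem_map.mp hxt
    have := (Finset.mem_sdiff.mp y.2).2
    simp only [cT, Finset.mem_sdiff, Finset.mem_univ, Finset.mem_union, true_and]
    tauto
  · intro B hB
    have hBT := Finset.mem_powerset.mp hB
    rw [Finset.subtype_map_of_mem (union_subset_cAc hdisj hBT),
      Finset.union_sdiff_cancel_left ((disjoint_cT Ain Aout).mono_right hBT)]
  · intro t ht
    have hAt : Ain.subtype (· ∈ cAc Aout) ⊆ t := (Finset.mem_filter.mp ht).2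
    ext x
    simp only [Finset.union_sdiff_self_eq_union, Finset.mem_subtype, Finset.mem_union]
    rw [← Function.Embedding.subtype_apply, Finset.mem_map']
    exact ⟨fun h => h.elim (fun h => hAt (Finset.mem_subtype.mpr h)) id, Or.inr⟩
  · intro B hB
    exact (det_submatrix_subtype_subm L
      (union_subset_cAc hdisj (Finset.mem_powerset.mp hB))).symm

end DPP

open DPP

theorem stmt8_general {N : ℕ} (L : Matrix (Fin N) (Fin N) ℝ)
    (Ain Aout : Finset (Fin N)) (hdisj : Disjoint Ain Aout)
    (hinv1 : IsUnit (dppCondM L Ain Aout).det)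
    (hinv2 : IsUnit (subm2 ((dppCondM L Ain Aout)⁻¹) (cT_subset_cAc Ain Aout)).det) :
    ∀ B : Finset (Fin N), ∀ hB : B ⊆ cT Ain Aout,
      (subm L (Ain ∪ B) (Ain ∪ B)).det * (dppCondK L Ain Aout + 1).det
        = (∑ B' ∈ (cT Ain Aout).powerset, (subm L (Ain ∪ B') (Ain ∪ B')).det)
            * (subm2 (dppCondK L Ain Aout) hB).det := by
  intro B hB
  have hJacobi := det_subm_eq_det_dppCondM_mul L hdisj hinv1
  have hK : dppCondK L Ain Aout + 1
      = (subm2 (dppCondM L Ain Aout)⁻¹ (cT_subset_cAc Ain Aout))⁻¹ :=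
    sub_add_cancel _ _
  have hdetM : (dppCondM L Ain Aout).det
      = (subm L Ain Ain).det * (dppCondK L Ain Aout + 1).det := by
    rw [hJacobi, hK, mul_assoc, ← det_mul, mul_nonsing_inv _ hinv2, det_one, mul_one]
  rw [← det_dppCondM_eq_sum L hdisj, hdetM,
    det_subm_union_eq_mul_det_schurCompl L ((disjoint_cT Ain Aout).mono_right hB)
      (isUnit_det_subm L hdisj hinv1 hinv2),
    dppCondK_eq_schurCompl L hdisj hinv1 hinv2, subm2_schurCompl]
  ring

/-- For an L-ensemble DPP with PSD kernel `L` and disjoint `A^{in}, A^{out}`,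
the conditional probabilities are proportional to `det(K_B)`: for every `B ⊆ T`,
`det(L_{A^{in} ∪ B}) · det(K + I) = (∑_{B' ⊆ T} det(L_{A^{in} ∪ B'})) · det(K_B)`,
provided the relevant inverses exist. -/
theorem stmt8 {N : ℕ} (L : Matrix (Fin N) (Fin N) ℝ) (hL : L.PosSemidef)
    (Ain Aout : Finset (Fin N)) (hdisj : Disjoint Ain Aout)
    (hinv1 : IsUnit (dppCondM L Ain Aout).det)
    (hinv2 : IsUnit (subm2 ((dppCondM L Ain Aout)⁻¹) (cT_subset_cAc Ain Aout)).det) :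
    ∀ B : Finset (Fin N), ∀ hB : B ⊆ cT Ain Aout,
      (subm L (Ain ∪ B) (Ain ∪ B)).det * (dppCondK L Ain Aout + 1).det
        = (∑ B' ∈ (cT Ain Aout).powerset, (subm L (Ain ∪ B') (Ain ∪ B')).det)
            * (subm2 (dppCondK L Ain Aout) hB).det :=
  stmt8_general L Ain Aout hdisj hinv1 hinv2
end

section
/- Let L be positive semi-definite, indexed by Y partitioned into Y_1,...,Y_m with L_{Y_i,Y_j} = 0 for |i−j| ≥ 2. Fix Ĉ_{1:i-1} = Ĉ_1 ∪ ... ∪ Ĉ_{i-1} with Ĉ_j ⊆ Y_j, and assume L_{Ĉ_{1:i-1}} is invertible. Then the conditional kernel (L_{Y_1∪...∪Y_i} | Ĉ_{1:i-1} ⊆ Y', complement of Ĉ_{1:i-1} in Y_1∪...∪Y_{i-1} disjoint from Y'), restricted to Y_i, equals L_{Y_i} − (L_{Ĉ_{i-1}, Y_i})^T (L̃_{Ĉ_{i-1}})^{-1} L_{Ĉ_{i-1}, Y_i}, where L̃_{Ĉ_{i-1}} is defined by the recursion L̃_{Ĉ_1} = L_{Ĉ_1}, L̃_{Ĉ_j}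 = L_{Ĉ_j} − (L_{Ĉ_{j-1},Ĉ_j})^T (L̃_{Ĉ_{j-1}})^{-1} L_{Ĉ_{j-1},Ĉ_j}. -/
/-!
Conditioning on `H = Ĉ_{1:i-1}` leaves the matrix `[[L_H, L_{H,Y_i}], [L_{Y_i,H}, L_{Y_i} + I]]`;
by the block-inverse formula, inverting the `Y_i`-block of its inverse and subtracting `I` gives
the Schur complement `L_{Y_i} - L_{Y_i,H} L_H⁻¹ L_{H,Y_i}`. Since `L` vanishes between `Y_i` and
`Ĉ_{1:i-2}` (block tridiagonality), writing `H = Ĉ_{1:i-2} ∪ Ĉ_{i-1}` the quotient formula for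
Schur complements turns this into `L_{Y_i} - L_{Y_i,Ĉ_{i-1}} S⁻¹ L_{Ĉ_{i-1},Y_i}`, where `S` is the
Schur complement of `L_{Ĉ_{1:i-2}}` in `L_{Ĉ_{1:i-1}}`; the same argument shows inductively that
`S` satisfies the recursion of `L̃`.
-/

open Matrix

/-- `Ĉ_{1:i-1} = Ĉ_0 ∪ ⋯ ∪ Ĉ_{i-1}` (0-based: the first `i` parts). -/
def hatC {N : ℕ} (Ci : ℕ → Finset (Fin N)) (i : ℕ) : Finset (Fin N) :=
  (Finset.range i).biUnion Ci

/-- The matrix `L_{Ĉ_{1:i-1} ∪ Y_i} + I_{·∉Ĉ_{1:i-1}}` appearing in the conditional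
kernel formula (here `Ĉ_{1:i-1} ∪ Y_i` is the complement of `A^{out}` inside
`Y_1 ∪ ⋯ ∪ Y_i`, and the identity part is supported off `A^{in} = Ĉ_{1:i-1}`). -/
def bwCondM {N : ℕ} (L : Matrix (Fin N) (Fin N) ℝ) (Ci Y : ℕ → Finset (Fin N)) (i : ℕ) :
    Matrix ((hatC Ci i ∪ Y i) : Finset (Fin N)) ((hatC Ci i ∪ Y i) : Finset (Fin N)) ℝ :=
  subm L (hatC Ci i ∪ Y i) (hatC Ci i ∪ Y i)
    + Matrix.of fun a b => if a = b ∧ a.1 ∉ hatC Ci i then (1 : ℝ) else 0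

/-- The conditional kernel restricted to `Y_i`. -/
noncomputable def bwCondK {N : ℕ} (L : Matrix (Fin N) (Fin N) ℝ)
    (Ci Y : ℕ → Finset (Fin N)) (i : ℕ) : Matrix (Y i) (Y i) ℝ :=
  (subm2 ((bwCondM L Ci Y i)⁻¹) Finset.subset_union_right)⁻¹ - 1


namespace Matrix

variable {l m n R : Type*} [Fintype m] [Fintype n] [CommRing R]

theorem mul_mul_eq_toBlocks₂₂_of_submatrix_inl_eq_zero {k : Type*} [Fintype k]
    (e : m ⊕ n ≃ k) (X : Matrix l k R) (M : Matrix k k R) (Y : Matrix k l R)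
    (hX : X.submatrix id (e ∘ Sum.inl) = 0) (hY : Y.submatrix (e ∘ Sum.inl) id = 0) :
    X * M * Y = X.submatrix id (e ∘ Sum.inr) * (M.submatrix e e).toBlocks₂₂
      * Y.submatrix (e ∘ Sum.inr) id := by
  have hXe : X.submatrix id e = fromCols 0 (X.submatrix id (e ∘ Sum.inr)) := by
    rw [← hX]; ext i (a | b) <;> rfl
  have hYe : Y.submatrix e id = fromRows 0 (Y.submatrix (e ∘ Sum.inr) id) := by
    rw [← hY]; ext (a | b) j <;> rfl
  calc X * M * Y = X.submatrix id e * M.submatrix e e * Y.submatrix e id := by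
        rw [submatrix_mul_equiv, submatrix_mul_equiv, submatrix_id_id]
    _ = _ := by
        rw [hXe, hYe, ← fromBlocks_toBlocks (M.submatrix e e), fromCols_mul_fromBlocks,
          fromCols_mul_fromRows]
        simp

variable [DecidableEq m] [DecidableEq n]

theorem isUnit_det_schur_of_isUnit_det_fromBlocks {A : Matrix m m R} {B : Matrix m n R}
    {C : Matrix n m R} {D : Matrix n n R} (hA : IsUnit A.det)
    (hM : IsUnit (fromBlocks A B C D).det) : IsUnit (D - C * A⁻¹ * B).det := by
  let _ : Invertible A := A.invertibleOfIsUnitDet hA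
  rw [det_fromBlocks₁₁, invOf_eq_nonsing_inv] at hM
  exact isUnit_of_mul_isUnit_right hM

theorem toBlocks₂₂_inv_fromBlocks {A : Matrix m m R} {B : Matrix m n R}
    {C : Matrix n m R} {D : Matrix n n R} (hA : IsUnit A.det)
    (hM : IsUnit (fromBlocks A B C D).det) :
    (fromBlocks A B C D)⁻¹.toBlocks₂₂ = (D - C * A⁻¹ * B)⁻¹ := by
  let _ : Invertible A := A.invertibleOfIsUnitDet hA
  let _ := (fromBlocks A B C D).invertibleOfIsUnitDet hM
  let _ := invertibleOfFromBlocks₁₁Invertible A B C D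
  rw [← invOf_eq_nonsing_inv, invOf_fromBlocks₁₁_eq, toBlocks_fromBlocks₂₂, invOf_eq_nonsing_inv,
    invOf_eq_nonsing_inv]

end Matrix

section Submatrices

variable {N : ℕ} (L : Matrix (Fin N) (Fin N) ℝ)

theorem subm_transpose (hL : L.IsSymm) (A B : Finset (Fin N)) : (subm L A B)ᵀ = subm L B A := by
  ext i j; exact hL.apply i.1 j.1

theorem subm_union_submatrix {A B : Finset (Fin N)} (h : Disjoint A B) :
    (subm L (A ∪ B) (A ∪ B)).submatrix (Equiv.Finset.union A B h) (Equiv.Finset.union A B h)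
      = fromBlocks (subm L A A) (subm L A B) (subm L B A) (subm L B B) := by
  ext (a | b) (a' | b') <;> rfl

noncomputable def schurCompl (A B : Finset (Fin N)) : Matrix B B ℝ :=
  subm L B B - subm L B A * (subm L A A)⁻¹ * subm L A B

theorem schurCompl_empty (B : Finset (Fin N)) : schurCompl L ∅ B = subm L B B := by
  ext i j
  simp [schurCompl, mul_apply]

/-- Since `L_{B,A} = 0`, only the `C`-block of `L_{A ∪ C}⁻¹` contributes, and that block is the
inverse of the Schur complement of `L_A` in `L_{A ∪ C}`. -/
theorem schurCompl_union {A B C : Finset (Fin N)} (hAC : Disjoint A C)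
    (hAB : ∀ a ∈ A, ∀ b ∈ B, L b a = 0 ∧ L a b = 0) (hA : IsUnit (subm L A A).det)
    (hAC' : IsUnit (subm L (A ∪ C) (A ∪ C)).det) :
    schurCompl L (A ∪ C) B = subm L B B - subm L B C * (schurCompl L A C)⁻¹ * subm L C B := by
  set e := Equiv.Finset.union A C hAC
  have hM : IsUnit (fromBlocks (subm L A A) (subm L A C) (subm L C A) (subm L C C)).det := by
    rwa [← subm_union_submatrix L hAC, det_submatrix_equiv_self]
  rw [schurCompl, mul_mul_eq_toBlocks₂₂_of_submatrix_inl_eq_zero e, ← inv_submatrix_equiv,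
    subm_union_submatrix L hAC, toBlocks₂₂_inv_fromBlocks hA hM]
  · rfl
  · ext b a; exact (hAB a.1 a.2 b.1 b.2).1
  · ext a b; exact (hAB a.1 a.2 b.1 b.2).2

end Submatrices

theorem hatC_zero {N : ℕ} (Ci : ℕ → Finset (Fin N)) : hatC Ci 0 = ∅ := rfl

theorem hatC_succ {N : ℕ} (Ci : ℕ → Finset (Fin N)) (j : ℕ) :
    hatC Ci (j + 1) = hatC Ci j ∪ Ci j := by
  rw [hatC, Finset.range_add_one, Finset.biUnion_insert, Finset.union_comm, hatC]

section ConditionalKernel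

variable {N : ℕ} {L : Matrix (Fin N) (Fin N) ℝ} {Ci Y : ℕ → Finset (Fin N)} {i : ℕ}

theorem bwCondM_submatrix_eq_fromBlocks (h : Disjoint (hatC Ci i) (Y i)) :
    (bwCondM L Ci Y i).submatrix (Equiv.Finset.union _ _ h) (Equiv.Finset.union _ _ h)
      = fromBlocks (subm L (hatC Ci i) (hatC Ci i)) (subm L (hatC Ci i) (Y i))
          (subm L (Y i) (hatC Ci i)) (subm L (Y i) (Y i) + 1) := by
  have hY : ∀ b ∈ Y i, b ∉ hatC Ci i := fun b hb ha => Finset.disjoint_left.mp h ha hb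
  ext (a | b) (a' | b')
  · simp [bwCondM, subm, a.2]
  · simp [bwCondM, subm, a.2]
  · have hne : b.1 ≠ a'.1 := fun he => hY _ b.2 (he ▸ a'.2)
    simp [bwCondM, subm, hne]
  · simp [bwCondM, subm, one_apply, hY _ b.2]

theorem bwCondK_eq_schurCompl (h : Disjoint (hatC Ci i) (Y i))
    (hC : IsUnit (subm L (hatC Ci i) (hatC Ci i)).det) (hM : IsUnit (bwCondM L Ci Y i).det) :
    bwCondK L Ci Y i = schurCompl L (hatC Ci i) (Y i) := by
  set e := Equiv.Finset.union _ _ h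
  have hF : IsUnit (fromBlocks (subm L (hatC Ci i) (hatC Ci i)) (subm L (hatC Ci i) (Y i))
      (subm L (Y i) (hatC Ci i)) (subm L (Y i) (Y i) + 1)).det := by
    rwa [← bwCondM_submatrix_eq_fromBlocks h, det_submatrix_equiv_self]
  have hsub : subm2 (bwCondM L Ci Y i)⁻¹ Finset.subset_union_right
      = ((bwCondM L Ci Y i).submatrix e e)⁻¹.toBlocks₂₂ := by
    rw [inv_submatrix_equiv]; rfl
  rw [bwCondK, hsub, bwCondM_submatrix_eq_fromBlocks h, toBlocks₂₂_inv_fromBlocks hC hF,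
    nonsing_inv_nonsing_inv _ (isUnit_det_schur_of_isUnit_det_fromBlocks hC hF), schurCompl]
  abel

end ConditionalKernel

section BlockTridiagonal

variable {N m : ℕ} {L : Matrix (Fin N) (Fin N) ℝ} {Ci Y : ℕ → Finset (Fin N)}

theorem disjoint_hatC (hdisj : ∀ i < m, ∀ j < m, i ≠ j → Disjoint (Y i) (Y j))
    (hCi : ∀ i < m, Ci i ⊆ Y i) {j : ℕ} (hj : j < m) : Disjoint (hatC Ci j) (Y j) := by
  rw [hatC, Finset.disjoint_biUnion_left]
  intro k hk
  have hkj : k < j := Finset.mem_range.mp hk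
  exact (hdisj k (by omega) j hj (by omega)).mono_left (hCi k (by omega))

theorem disjoint_hatC_Ci (hdisj : ∀ i < m, ∀ j < m, i ≠ j → Disjoint (Y i) (Y j))
    (hCi : ∀ i < m, Ci i ⊆ Y i) {j : ℕ} (hj : j < m) : Disjoint (hatC Ci j) (Ci j) :=
  (disjoint_hatC hdisj hCi hj).mono_right (hCi j hj)

theorem apply_eq_zero_of_mem_hatC
    (htri : ∀ i < m, ∀ j < m, i + 2 ≤ j →
      ∀ a ∈ Y i, ∀ b ∈ Y j, L a b = 0 ∧ L b a = 0)
    (hCi : ∀ i < m, Ci i ⊆ Y i) {k j : ℕ} (hkj : k < j) (hj : j < m) :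
    ∀ a ∈ hatC Ci k, ∀ b ∈ Y j, L b a = 0 ∧ L a b = 0 := by
  intro a ha b hb
  obtain ⟨l, hl, hal⟩ := Finset.mem_biUnion.mp ha
  have hlk : l < k := Finset.mem_range.mp hl
  exact (htri l (by omega) j hj (by omega) a (hCi l (by omega) hal) b hb).symm

theorem eq_schurCompl_hatC_of_recursion (hL : L.IsSymm)
    (hdisj : ∀ i < m, ∀ j < m, i ≠ j → Disjoint (Y i) (Y j))
    (htri : ∀ i < m, ∀ j < m, i + 2 ≤ j →
      ∀ a ∈ Y i, ∀ b ∈ Y j, L a b = 0 ∧ L b a = 0)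
    (hCi : ∀ i < m, Ci i ⊆ Y i) (Lt : (i : ℕ) → Matrix (Ci i) (Ci i) ℝ)
    (hLt0 : Lt 0 = subm L (Ci 0) (Ci 0))
    (hLtS : ∀ j, 0 < j → j < m →
      Lt j = subm L (Ci j) (Ci j)
        - (subm L (Ci (j - 1)) (Ci j))ᵀ * (Lt (j - 1))⁻¹ * subm L (Ci (j - 1)) (Ci j))
    (hinvC : ∀ j < m, IsUnit (subm L (hatC Ci j) (hatC Ci j)).det) :
    ∀ j < m, Lt j = schurCompl L (hatC Ci j) (Ci j) := by
  intro j
  induction j with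
  | zero => intro _; rw [hLt0, hatC_zero, schurCompl_empty]
  | succ j ih =>
    intro hj
    have hzero : ∀ a ∈ hatC Ci j, ∀ b ∈ Ci (j + 1), L b a = 0 ∧ L a b = 0 :=
      fun a ha b hb => apply_eq_zero_of_mem_hatC htri hCi (by omega) hj a ha b (hCi _ hj hb)
    have hinv := hinvC (j + 1) hj
    rw [hatC_succ] at hinv
    rw [hLtS (j + 1) (by omega) hj, Nat.add_sub_cancel, ih (by omega), hatC_succ,
      schurCompl_union L (disjoint_hatC_Ci hdisj hCi (by omega)) hzero (hinvC j (by omega)) hinv,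
      subm_transpose L hL]

end BlockTridiagonal

theorem stmt9_general {N m : ℕ} (L : Matrix (Fin N) (Fin N) ℝ) (hL : L.PosSemidef)
    (Y : ℕ → Finset (Fin N))
    (hdisj : ∀ i < m, ∀ j < m, i ≠ j → Disjoint (Y i) (Y j))
    (htri : ∀ i < m, ∀ j < m, i + 2 ≤ j →
      ∀ a ∈ Y i, ∀ b ∈ Y j, L a b = 0 ∧ L b a = 0)
    (Ci : ℕ → Finset (Fin N)) (hCi : ∀ i < m, Ci i ⊆ Y i)
    (Lt : (i : ℕ) → Matrix (Ci i) (Ci i) ℝ)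
    (hLt0 : Lt 0 = subm L (Ci 0) (Ci 0))
    (hLtS : ∀ j, 0 < j → j < m →
      Lt j = subm L (Ci j) (Ci j)
        - (subm L (Ci (j - 1)) (Ci j))ᵀ * (Lt (j - 1))⁻¹ * subm L (Ci (j - 1)) (Ci j))
    (hinvC : ∀ j < m, IsUnit (subm L (hatC Ci j) (hatC Ci j)).det)
    (i : ℕ) (hi1 : 1 ≤ i) (him : i < m)
    (hinvM : IsUnit (bwCondM L Ci Y i).det) :
    bwCondK L Ci Y i
      = subm L (Y i) (Y i)
        - (subm L (Ci (i - 1)) (Y i))ᵀ * (Lt (i - 1))⁻¹ * subm L (Ci (i - 1)) (Y i) := by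
  obtain ⟨k, rfl⟩ : ∃ k, i = k + 1 := ⟨i - 1, by omega⟩
  have hsymm : L.IsSymm := isHermitian_iff_isSymm.mp hL.isHermitian
  have hinv := hinvC (k + 1) him
  rw [hatC_succ] at hinv
  have hquot := schurCompl_union L (disjoint_hatC_Ci hdisj hCi (by omega))
    (apply_eq_zero_of_mem_hatC htri hCi (Nat.lt_succ_self k) him) (hinvC k (by omega)) hinv
  rw [bwCondK_eq_schurCompl (disjoint_hatC hdisj hCi him) (hinvC _ him) hinvM, hatC_succ, hquot,
    Nat.add_sub_cancel, subm_transpose L hsymm,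
    eq_schurCompl_hatC_of_recursion hsymm hdisj htri hCi Lt hLt0 hLtS hinvC k (by omega)]

/-- For a block tridiagonal PSD kernel `L`, the conditional kernel of
`L_{Y_1∪⋯∪Y_i}` given `Ĉ_{1:i-1}` in and the rest of `Y_1∪⋯∪Y_{i-1}` out, restricted to
`Y_i`, equals `L_{Y_i} − (L_{Ĉ_{i-1},Y_i})ᵀ (L̃_{Ĉ_{i-1}})⁻¹ L_{Ĉ_{i-1},Y_i}` where `L̃`
satisfies the Schur-complement recursion. -/
theorem stmt9 {N m : ℕ} (L : Matrix (Fin N) (Fin N) ℝ) (hL : L.PosSemidef)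
    (Y : ℕ → Finset (Fin N))
    (hdisj : ∀ i < m, ∀ j < m, i ≠ j → Disjoint (Y i) (Y j))
    (hcover : (Finset.range m).biUnion Y = Finset.univ)
    (htri : ∀ i < m, ∀ j < m, i + 2 ≤ j →
      ∀ a ∈ Y i, ∀ b ∈ Y j, L a b = 0 ∧ L b a = 0)
    (Ci : ℕ → Finset (Fin N)) (hCi : ∀ i < m, Ci i ⊆ Y i)
    (Lt : (i : ℕ) → Matrix (Ci i) (Ci i) ℝ)
    (hLt0 : Lt 0 = subm L (Ci 0) (Ci 0))
    (hLtS : ∀ j, 0 < j → j < m →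
      Lt j = subm L (Ci j) (Ci j)
        - (subm L (Ci (j - 1)) (Ci j))ᵀ * (Lt (j - 1))⁻¹ * subm L (Ci (j - 1)) (Ci j))
    (hinvLt : ∀ j < m, IsUnit (Lt j).det)
    (hinvC : ∀ j < m, IsUnit (subm L (hatC Ci j) (hatC Ci j)).det)
    (i : ℕ) (hi1 : 1 ≤ i) (him : i < m)
    (hinvM : IsUnit (bwCondM L Ci Y i).det)
    (hinvMi : IsUnit (subm2 ((bwCondM L Ci Y i)⁻¹)
      (Finset.subset_union_right : Y i ⊆ hatC Ci i ∪ Y i)).det) :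
    bwCondK L Ci Y i
      = subm L (Y i) (Y i)
        - (subm L (Ci (i - 1)) (Y i))ᵀ * (Lt (i - 1))⁻¹ * subm L (Ci (i - 1)) (Y i) :=
  stmt9_general L hL Y hdisj htri Ci hCi Lt hLt0 hLtS hinvC i hi1 him hinvM
end

section
/- For a positive semi-definite matrix L with block tridiagonal structure L_{Y_i,Y_j} = 0 for |i−j| ≥ 2, and any subset C ⊆ Y with C_i = C ∩ Y_i such that each L̃_{C_i} is invertible, maximizing det(L_C) over C ⊆ Y is equivalent to maximizing the product ∏_{i=1}^m det(L̃_{C_i}) over tuples (C_1,...,C_m) with C_i ⊆ Y_i, where L̃_{C_1} = L_{C_1} and L̃_{C_i} = L_{C_i} − (L_{C_{i-1},C_i})^T (L̃_{C_{i-1}})^{-1} L_{C_{i-1},C_i}. -/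
open Matrix

section Aux

variable {N : ℕ}

/-- A disjoint union of finsets is equivalent to the sum of the pieces. -/
def unionEquiv (P Q : Finset (Fin N)) (h : Disjoint P Q) :
    ((P ∪ Q : Finset (Fin N)) : Type) ≃ (P ⊕ Q) where
  toFun x := if hx : x.1 ∈ P then Sum.inl ⟨x.1, hx⟩ else
    Sum.inr ⟨x.1, (Finset.mem_union.1 x.2).resolve_left hx⟩
  invFun := Sum.elim (fun p => ⟨p.1, Finset.mem_union_left _ p.2⟩)
    (fun q => ⟨q.1, Finset.mem_union_right _ q.2⟩)
  left_inv x := by by_cases hx : x.1 ∈ P <;> simp [hx]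
  right_inv x := by
    cases x with
    | inl p => simp [p.2]
    | inr q =>
      have : q.1 ∉ P := Finset.disjoint_right.1 h q.2
      simp [this]

lemma subm_det_congr (L : Matrix (Fin N) (Fin N) ℝ) {A B : Finset (Fin N)} (h : A = B) :
    (subm L A A).det = (subm L B B).det := by subst h; rfl

lemma subm_inv_congr (L : Matrix (Fin N) (Fin N) ℝ) {A B : Finset (Fin N)} (h : A = B)
    {x y : Fin N} (hxA : x ∈ A) (hyA : y ∈ A) (hxB : x ∈ B) (hyB : y ∈ B) :
    (subm L A A)⁻¹ ⟨x, hxA⟩ ⟨y, hyA⟩ = (subm L B B)⁻¹ ⟨x, hxB⟩ ⟨y, hyB⟩ := by subst h; rfl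

lemma subm_union_eq (L : Matrix (Fin N) (Fin N) ℝ) (P Q : Finset (Fin N)) (h : Disjoint P Q) :
    subm L (P ∪ Q) (P ∪ Q) =
      (Matrix.fromBlocks (subm L P P) (subm L P Q) (subm L Q P) (subm L Q Q)).submatrix
        (unionEquiv P Q h) (unionEquiv P Q h) := by
  ext x y
  simp only [Matrix.submatrix_apply, unionEquiv, Equiv.coe_fn_mk]
  by_cases hx : x.1 ∈ P <;> by_cases hy : y.1 ∈ P <;> simp [hx, hy, Matrix.fromBlocks, subm]

end Aux

/-- For a block tridiagonal PSD matrix `L` with blocks `Y 0,…,Y (m-1)`,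
the map `C ↦ (C ∩ Y 0, …, C ∩ Y (m-1))` is a bijection between subsets of the ground set
and tuples of per-block subsets, and under this correspondence `det(L_C)` equals
`∏ᵢ det(L̃_{C_i})` with `L̃` defined by the Schur-complement recursion; hence maximizing
`det(L_C)` is equivalent to maximizing the product. -/
theorem stmt10 {N m : ℕ} (L : Matrix (Fin N) (Fin N) ℝ) (hL : L.PosSemidef)
    (Y : ℕ → Finset (Fin N))
    (hdisj : ∀ i < m, ∀ j < m, i ≠ j → Disjoint (Y i) (Y j))
    (hcover : (Finset.range m).biUnion Y = Finset.univ)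
    (htri : ∀ i < m, ∀ j < m, i + 2 ≤ j →
      ∀ a ∈ Y i, ∀ b ∈ Y j, L a b = 0 ∧ L b a = 0) :
    (∀ Ci : ℕ → Finset (Fin N), (∀ i < m, Ci i ⊆ Y i) →
      ∃! C : Finset (Fin N), ∀ i < m, C ∩ Y i = Ci i)
    ∧ ∀ C : Finset (Fin N),
        ∀ Lt : (i : ℕ) → Matrix ((C ∩ Y i : Finset (Fin N))) ((C ∩ Y i : Finset (Fin N))) ℝ,
        Lt 0 = subm L (C ∩ Y 0) (C ∩ Y 0) →
        (∀ i, 0 < i → i < m →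
          Lt i = subm L (C ∩ Y i) (C ∩ Y i)
            - (subm L (C ∩ Y (i - 1)) (C ∩ Y i))ᵀ * (Lt (i - 1))⁻¹
                * subm L (C ∩ Y (i - 1)) (C ∩ Y i)) →
        (∀ i < m, IsUnit (Lt i).det) →
        (subm L C C).det = ∏ i ∈ Finset.range m, (Lt i).det := by
  have hsym : ∀ a b : Fin N, L a b = L b a := by
    intro a b
    simpa using hL.1.apply b a
  constructor
  · -- Part 1: bijection
    intro Ci hCi
    refine ⟨(Finset.range m).biUnion Ci, ?_, ?_⟩
    · intro i him
      ext x
      simp only [Finset.mem_inter, Finset.mem_biUnion, Finset.mem_range]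
      constructor
      · rintro ⟨⟨j, hj, hxj⟩, hxY⟩
        rcases eq_or_ne j i with rfl | hne
        · exact hxj
        · exact absurd hxY (Finset.disjoint_left.1 (hdisj j hj i him hne) (hCi j hj hxj))
      · intro hx
        exact ⟨⟨i, him, hx⟩, hCi i him hx⟩
    · intro C hC
      ext x
      have hxuniv : x ∈ (Finset.range m).biUnion Y := by
        rw [hcover]; exact Finset.mem_univ x
      obtain ⟨i, hi, hxY⟩ := Finset.mem_biUnion.1 hxuniv
      have hi' : i < m := Finset.mem_range.1 hi
      simp only [Finset.mem_biUnion, Finset.mem_range]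
      constructor
      · intro hxC
        refine ⟨i, hi', ?_⟩
        rw [← hC i hi']
        exact Finset.mem_inter.2 ⟨hxC, hxY⟩
      · rintro ⟨j, hj, hxj⟩
        have : x ∈ C ∩ Y j := by rw [hC j hj]; exact hxj
        exact (Finset.mem_inter.1 this).1
  · -- Part 2: determinant identity
    intro C Lt h0 hrec hunit
    rcases Nat.eq_zero_or_pos m with hm | hm
    · subst hm
      have huniv : (Finset.univ : Finset (Fin N)) = ∅ := by simpa using hcover.symm
      have hCempty : C = ∅ := Finset.eq_empty_of_forall_notMem fun x hx => by
        have : x ∈ (Finset.univ : Finset (Fin N)) := Finset.mem_univ x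
        rw [huniv] at this; exact absurd this (Finset.notMem_empty x)
      haveI : IsEmpty (C : Type) := by
        rw [hCempty]; exact Finset.isEmpty_coe_sort.2 rfl
      simp
    · -- the key induction
      have key : ∀ k, k < m →
          (subm L (C ∩ (Finset.range (k+1)).biUnion Y)
              (C ∩ (Finset.range (k+1)).biUnion Y)).det
            = ∏ i ∈ Finset.range (k+1), (Lt i).det
          ∧ ∀ (x y : Fin N) (hx : x ∈ C ∩ Y k) (hy : y ∈ C ∩ Y k)
              (hx' : x ∈ C ∩ (Finset.range (k+1)).biUnion Y)
              (hy' : y ∈ C ∩ (Finset.range (k+1)).biUnion Y),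
              (subm L (C ∩ (Finset.range (k+1)).biUnion Y)
                  (C ∩ (Finset.range (k+1)).biUnion Y))⁻¹ ⟨x, hx'⟩ ⟨y, hy'⟩
                = (Lt k)⁻¹ ⟨x, hx⟩ ⟨y, hy⟩ := by
        intro k
        induction k with
        | zero =>
          intro hk
          have hD1 : C ∩ (Finset.range 1).biUnion Y = C ∩ Y 0 := by simp
          constructor
          · rw [Finset.prod_range_one, h0, subm_det_congr L hD1]
          · intro x y hx hy hx' hy'
            rw [h0]
            exact subm_inv_congr L hD1 hx' hy' hx hy
        | succ k ih =>
          intro hk1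
          have hkm : k < m := by omega
          obtain ⟨ihdet, ihinv⟩ := ih hkm
          set P : Finset (Fin N) := C ∩ (Finset.range (k+1)).biUnion Y with hP
          set Q : Finset (Fin N) := C ∩ Y (k+1) with hQ
          set W : Finset (Fin N) := C ∩ Y k with hW
          have hPQ : C ∩ (Finset.range (k+2)).biUnion Y = P ∪ Q := by
            rw [hP, hQ, Finset.range_add_one, Finset.biUnion_insert,
              Finset.inter_union_distrib_left, Finset.union_comm]
          have hdisjPQ : Disjoint P Q := by
            rw [Finset.disjoint_left]
            intro a haP haQ
            obtain ⟨_, hab⟩ := Finset.mem_inter.1 haP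
            obtain ⟨i, hi, haYi⟩ := Finset.mem_biUnion.1 hab
            have hi' : i < k + 1 := Finset.mem_range.1 hi
            have haY : a ∈ Y (k+1) := (Finset.mem_inter.1 haQ).2
            exact Finset.disjoint_left.1
              (hdisj i (by omega) (k+1) hk1 (by omega)) haYi haY
          -- vanishing of off-tridiagonal entries
          have hvanish : ∀ u ∈ P, u ∉ W → ∀ y ∈ Q, L u y = 0 ∧ L y u = 0 := by
            intro u huP huW y hyQ
            obtain ⟨huC, hub⟩ := Finset.mem_inter.1 huP
            obtain ⟨i, hi, huYi⟩ := Finset.mem_biUnion.1 hub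
            have hi' : i < k + 1 := Finset.mem_range.1 hi
            have hik : i ≠ k := by
              intro h; subst h
              exact huW (Finset.mem_inter.2 ⟨huC, huYi⟩)
            have : i + 2 ≤ k + 1 := by omega
            exact htri i (by omega) (k+1) hk1 this u huYi y (Finset.mem_inter.1 hyQ).2
          have hWP : W ⊆ P := by
            intro w hw
            obtain ⟨hwC, hwY⟩ := Finset.mem_inter.1 hw
            exact Finset.mem_inter.2 ⟨hwC, Finset.mem_biUnion.2 ⟨k, Finset.mem_range.2 (by omega), hwY⟩⟩
          set A : Matrix P P ℝ := subm L P P with hA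
          have hAdet : IsUnit A.det := by
            rw [hA, ihdet, isUnit_iff_ne_zero]
            refine Finset.prod_ne_zero_iff.2 fun i hi => ?_
            have := Finset.mem_range.1 hi
            exact isUnit_iff_ne_zero.1 (hunit i (by omega))
          haveI iA : Invertible A := A.invertibleOfIsUnitDet hAdet
          -- the inclusion matrix
          set J : Matrix P W ℝ :=
            Matrix.of (fun (u : P) (w : W) => if u.1 = w.1 then (1:ℝ) else 0) with hJ
          have hB : subm L P Q = J * subm L W Q := by
            ext u y
            rw [Matrix.mul_apply]
            by_cases hu : u.1 ∈ W
            · rw [Fintype.sum_eq_single (⟨u.1, hu⟩ : W)]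
              · simp [hJ, subm]
              · intro w hw
                have : u.1 ≠ w.1 := fun h => hw (Subtype.ext h.symm)
                simp [hJ, this]
            · have hz : ∀ w : W, J u w * subm L W Q w y = 0 := by
                intro w
                have : u.1 ≠ w.1 := fun h => hu (h ▸ w.2)
                simp [hJ, this]
              rw [Finset.sum_congr rfl fun w _ => hz w, Finset.sum_const_zero]
              exact (hvanish u.1 u.2 hu y.1 y.2).1
          have hQPt : subm L Q P = (subm L P Q)ᵀ := by
            ext x y
            exact hsym x.1 y.1
          have hJAJ : Jᵀ * ⅟A * J = (Lt k)⁻¹ := by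
            have hstep1 : ∀ (w : W) (v : P),
                (Jᵀ * ⅟A) w v = (⅟A) ⟨w.1, hWP w.2⟩ v := by
              intro w v
              rw [Matrix.mul_apply]
              rw [Fintype.sum_eq_single (⟨w.1, hWP w.2⟩ : P)]
              · simp [hJ]
              · intro u hu
                have : u.1 ≠ w.1 := fun h => hu (Subtype.ext h)
                simp [hJ, this]
            ext w w'
            rw [Matrix.mul_apply]
            rw [Fintype.sum_eq_single (⟨w'.1, hWP w'.2⟩ : P)]
            · have hJ1 : J ⟨w'.1, hWP w'.2⟩ w' = 1 := by simp [hJ]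
              rw [hJ1, mul_one, hstep1, invOf_eq_nonsing_inv]
              exact ihinv w.1 w'.1 w.2 w'.2 (hWP w.2) (hWP w'.2)
            · intro v hv
              have : v.1 ≠ w'.1 := fun h => hv (Subtype.ext h)
              simp [hJ, this]
          have hSchur : subm L Q Q - subm L Q P * ⅟A * subm L P Q = Lt (k+1) := by
            rw [hQPt, hB, Matrix.transpose_mul]
            have : (subm L W Q)ᵀ * Jᵀ * ⅟A * (J * subm L W Q)
                = (subm L W Q)ᵀ * (Jᵀ * ⅟A * J) * subm L W Q := by
              simp only [Matrix.mul_assoc]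
            rw [this, hJAJ]
            rw [hrec (k+1) (by omega) (by omega)]
            rfl
          -- determinant
          set e := unionEquiv P Q hdisjPQ with he
          have hsub := subm_union_eq L P Q hdisjPQ
          have hdetPQ : (subm L (P ∪ Q) (P ∪ Q)).det
              = A.det * (Lt (k+1)).det := by
            rw [hsub, Matrix.det_submatrix_equiv_self,
              Matrix.det_fromBlocks₁₁, hSchur]
          have hdet2 : (subm L (C ∩ (Finset.range (k+2)).biUnion Y)
              (C ∩ (Finset.range (k+2)).biUnion Y)).det
              = ∏ i ∈ Finset.range (k+2), (Lt i).det := by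
            rw [subm_det_congr L hPQ, hdetPQ, hA, ihdet, ← Finset.prod_range_succ]
          refine ⟨hdet2, ?_⟩
          -- inverse claim
          intro x y hx hy hx' hy'
          haveI iSchur : Invertible (Lt (k+1)) :=
            (Lt (k+1)).invertibleOfIsUnitDet (hunit (k+1) hk1)
          haveI iSchur' : Invertible (subm L Q Q - subm L Q P * ⅟A * subm L P Q) := by
            rw [hSchur]; exact iSchur
          haveI iM : Invertible
              (Matrix.fromBlocks A (subm L P Q) (subm L Q P) (subm L Q Q)) :=
            Matrix.fromBlocks₁₁Invertible _ _ _ _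
          have hxP : x ∉ P := Finset.disjoint_right.1 hdisjPQ hx
          have hyP : y ∉ P := Finset.disjoint_right.1 hdisjPQ hy
          have hxPQ : x ∈ P ∪ Q := Finset.mem_union_right _ hx
          have hyPQ : y ∈ P ∪ Q := Finset.mem_union_right _ hy
          have h1 : (subm L (C ∩ (Finset.range (k+2)).biUnion Y)
                (C ∩ (Finset.range (k+2)).biUnion Y))⁻¹ ⟨x, hx'⟩ ⟨y, hy'⟩
              = (subm L (P ∪ Q) (P ∪ Q))⁻¹ ⟨x, hxPQ⟩ ⟨y, hyPQ⟩ :=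
            subm_inv_congr L hPQ hx' hy' hxPQ hyPQ
          rw [h1, hsub, Matrix.inv_submatrix_equiv]
          have hex : e ⟨x, hxPQ⟩ = Sum.inr ⟨x, hx⟩ := by
            simp [he, unionEquiv, hxP]
          have hey : e ⟨y, hyPQ⟩ = Sum.inr ⟨y, hy⟩ := by
            simp [he, unionEquiv, hyP]
          rw [Matrix.submatrix_apply, hex, hey]
          rw [← Matrix.invOf_eq_nonsing_inv, Matrix.invOf_fromBlocks₁₁_eq]
          have hfin : (⅟(subm L Q Q - subm L Q P * ⅟A * subm L P Q)) = (Lt (k+1))⁻¹ := by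
            rw [invOf_eq_nonsing_inv, hSchur]
          simp only [Matrix.fromBlocks_apply₂₂]
          rw [hfin]
      -- conclude
      have h1 := (key (m-1) (by omega)).1
      have h2 : m - 1 + 1 = m := by omega
      rw [h2] at h1
      have hDm : C ∩ (Finset.range m).biUnion Y = C := by
        rw [hcover]; exact Finset.inter_univ C
      rw [← subm_det_congr L hDm]
      exact h1
end
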